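/- arXiv:2205.10105 — 8 statements merged into one kernel-verified Lean document; each statement's English description precedes it below -/
import Mathlib

section
/- Let T be a finite tree rooted at a vertex r and let X \subseteq V(T). Then the lca-closure X' of X satisfies |X'| \le 2|X|. -/
open SimpleGraph

section Defs

variable {V : Type*}

/-- `v` lies on every path from `a` to `b` in `G`; in a tree this says that `v`
lies on the unique `(a,b)`-path. -/
def OnPath (G : SimpleGraph V) (a b v : V) : Prop :=
  ∀ p : G.Walk a b, p.IsPath → v ∈ p.support

/-- `u` belongs to the subtree `T_v` of the tree `G` rooted at `r`, i.e. `v` lies on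
the unique `(r,u)`-path. -/
def InSubtree (G : SimpleGraph V) (r v u : V) : Prop :=
  OnPath G r u v

/-- The vertex set of the subtree `T_v` of the tree `G` rooted at `r`. -/
def SubtreeSet (G : SimpleGraph V) (r v : V) : Set V :=
  {u | InSubtree G r v u}

/-- `S` is a `P`-multicut in `G`: it meets every path between each terminal pair. -/
def IsMulticut (G : SimpleGraph V) (P : Set (V × V)) (S : Set V) : Prop :=
  ∀ s t : V, (s, t) ∈ P → ∀ p : G.Walk s t, p.IsPath → ∃ v ∈ S, v ∈ p.support

/-- `S` is a `P`-multicut in the subgraph of `G` induced by `A`: it meets every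
path staying inside `A` between each terminal pair with both ends in `A`. -/
def IsMulticutOn (G : SimpleGraph V) (A : Set V) (P : Set (V × V)) (S : Set V) : Prop :=
  ∀ s t : V, (s, t) ∈ P → s ∈ A → t ∈ A →
    ∀ p : G.Walk s t, p.IsPath → (∀ u ∈ p.support, u ∈ A) → ∃ v ∈ S, v ∈ p.support

/-- `w` is a least common ancestor of `u` and `v` in the tree `G` rooted at `r`:
`u, v ∈ T_w` and `w` is furthest from `r` with this property. -/
def IsLCA (G : SimpleGraph V) (r u v w : V) : Prop :=
  InSubtree G r w u ∧ InSubtree G r w v ∧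
    ∀ w' : V, InSubtree G r w' u → InSubtree G r w' v → G.dist r w' ≤ G.dist r w

/-- `X` is closed under taking least common ancestors. -/
def LCAClosed (G : SimpleGraph V) (r : V) (X : Set V) : Prop :=
  ∀ u ∈ X, ∀ v ∈ X, ∀ w : V, IsLCA G r u v w → w ∈ X

/-- The vertex set of `T^†_{v,x}` for a descendant `x` of `v`:
all vertices `u ≠ v` of `T_v` that either lie in `T_x` or whose path to `x`
avoids `v`.  (For `v = x` this is `T_x \ {x}`.) -/
def TdagSet (G : SimpleGraph V) (r v x : V) : Set V :=
  {u | u ≠ v ∧ InSubtree G r v u ∧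
    (InSubtree G r x u ∨ ∀ p : G.Walk u x, p.IsPath → v ∉ p.support)}

/-- `I[v]`: terminal pairs with both endpoints in `T_v` whose path passes through `v`. -/
def Ibr (G : SimpleGraph V) (r : V) (P : Set (V × V)) (v : V) : Set (V × V) :=
  {q | q ∈ P ∧ InSubtree G r v q.1 ∧ InSubtree G r v q.2 ∧ OnPath G q.1 q.2 v}

/-- `O[v]`: terminal pairs with exactly one endpoint in `T_v`. -/
def Obr (G : SimpleGraph V) (r : V) (P : Set (V × V)) (v : V) : Set (V × V) :=
  {q | q ∈ P ∧ ((InSubtree G r v q.1 ∧ ¬ InSubtree G r v q.2) ∨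
    (¬ InSubtree G r v q.1 ∧ InSubtree G r v q.2))}

end Defs
open SimpleGraph

namespace StmtAux

variable {V : Type*} [DecidableEq V] {T : SimpleGraph V}

/-- The unique path between two vertices of a tree. -/
noncomputable def pth (hT : T.IsTree) (u v : V) : T.Walk u v :=
  ((hT.isConnected.preconnected u v).some.toPath : T.Path u v)

lemma pth_isPath (hT : T.IsTree) (u v : V) : (pth hT u v).IsPath :=
  ((hT.isConnected.preconnected u v).some.toPath).2

lemma path_eq (hT : T.IsTree) {u v : V} (p : T.Walk u v) (hp : p.IsPath) :
    p = pth hT u v :=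
  congrArg Subtype.val (hT.IsAcyclic.path_unique ⟨p, hp⟩ ⟨pth hT u v, pth_isPath hT u v⟩)

lemma pth_length (hT : T.IsTree) (u v : V) : (pth hT u v).length = T.dist u v := by
  obtain ⟨p, hp⟩ := hT.isConnected.exists_walk_length_eq_dist u v
  have h1 : (pth hT u v).length ≤ T.dist u v := by
    have := path_eq hT p.bypass p.bypass_isPath
    calc (pth hT u v).length = p.bypass.length := by rw [← this]
      _ ≤ p.length := p.length_bypass_le
      _ = T.dist u v := hp
  exact le_antisymm h1 (SimpleGraph.dist_le _)

lemma dist_add (hT : T.IsTree) {a b x : V} (h : x ∈ (pth hT a b).support) :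
    T.dist a b = T.dist a x + T.dist x b := by
  have hsp := (pth hT a b).take_spec h
  have ht : ((pth hT a b).takeUntil x h) = pth hT a x :=
    path_eq hT _ ((pth_isPath hT a b).takeUntil h)
  have hd : ((pth hT a b).dropUntil x h) = pth hT x b :=
    path_eq hT _ ((pth_isPath hT a b).dropUntil h)
  have := congrArg SimpleGraph.Walk.length hsp
  rw [SimpleGraph.Walk.length_append, ht, hd, pth_length, pth_length, pth_length] at this
  omega

variable {r : V}

lemma inSubtree_iff (hT : T.IsTree) {v u : V} :
    InSubtree T r v u ↔ v ∈ (pth hT r u).support := by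
  constructor
  · intro h; exact h (pth hT r u) (pth_isPath hT r u)
  · intro h p hp; rwa [path_eq hT p hp]

lemma anc_refl (hT : T.IsTree) (u : V) : InSubtree T r u u := by
  rw [inSubtree_iff hT]; exact SimpleGraph.Walk.end_mem_support _

lemma anc_dist (hT : T.IsTree) {v u : V} (h : InSubtree T r v u) :
    T.dist r u = T.dist r v + T.dist v u :=
  dist_add hT ((inSubtree_iff hT).mp h)

lemma anc_depth_le (hT : T.IsTree) {v u : V} (h : InSubtree T r v u) :
    T.dist r v ≤ T.dist r u := by
  have := anc_dist hT h; omega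

lemma anc_eq_of_depth (hT : T.IsTree) {v u : V} (h : InSubtree T r v u)
    (hd : T.dist r v = T.dist r u) : v = u := by
  have h1 := anc_dist hT h
  have h2 : T.dist v u = 0 := by omega
  exact (hT.isConnected.dist_eq_zero_iff).mp h2

lemma anc_trans (hT : T.IsTree) {w v u : V} (h1 : InSubtree T r w v)
    (h2 : InSubtree T r v u) : InSubtree T r w u := by
  rw [inSubtree_iff hT] at h1 h2 ⊢
  have ht : ((pth hT r u).takeUntil v h2) = pth hT r v :=
    path_eq hT _ ((pth_isPath hT r u).takeUntil h2)
  have : w ∈ ((pth hT r u).takeUntil v h2).support := by rw [ht]; exact h1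
  exact SimpleGraph.Walk.support_takeUntil_subset _ _ this

lemma anc_comparable (hT : T.IsTree) {v w u : V} (hv : InSubtree T r v u)
    (hw : InSubtree T r w u) : InSubtree T r v w ∨ InSubtree T r w v := by
  rw [inSubtree_iff hT] at hv hw
  set p := pth hT r u with hp
  by_cases h1 : w ∈ (p.takeUntil v hv).support
  · right
    rw [inSubtree_iff hT]
    rwa [path_eq hT (p.takeUntil v hv) ((pth_isPath hT r u).takeUntil hv)] at h1
  by_cases h2 : v ∈ (p.takeUntil w hw).support
  · left
    rw [inSubtree_iff hT]
    rwa [path_eq hT (p.takeUntil w hw) ((pth_isPath hT r u).takeUntil hw)] at h2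
  -- both in each other's dropUntil: v = w
  have hw' : w ∈ (p.dropUntil v hv).support := by
    have := hw
    rw [← p.take_spec hv, SimpleGraph.Walk.mem_support_append_iff] at this
    tauto
  have hv' : v ∈ (p.dropUntil w hw).support := by
    have := hv
    rw [← p.take_spec hw, SimpleGraph.Walk.mem_support_append_iff] at this
    tauto
  have e1 : (p.dropUntil v hv) = pth hT v u := path_eq hT _ ((pth_isPath hT r u).dropUntil hv)
  have e2 : (p.dropUntil w hw) = pth hT w u := path_eq hT _ ((pth_isPath hT r u).dropUntil hw)
  rw [e1] at hw'
  rw [e2] at hv'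
  have d1 := dist_add hT hw'
  have d2 := dist_add hT hv'
  have hc : T.dist v w = T.dist w v := SimpleGraph.dist_comm
  have : T.dist v w = 0 := by omega
  have hvw : v = w := (hT.isConnected.dist_eq_zero_iff).mp this
  subst hvw
  exact Or.inl (anc_refl hT v)

lemma isLCA_of_anc (hT : T.IsTree) {m x : V} (h : InSubtree T r m x) :
    IsLCA T r x m m :=
  ⟨h, anc_refl hT m, fun c _ hcm => anc_depth_le hT hcm⟩

lemma lca_symm {u v w : V} (h : IsLCA T r u v w) : IsLCA T r v u w :=
  ⟨h.2.1, h.1, fun c h1 h2 => h.2.2 c h2 h1⟩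

lemma lca_unique (hT : T.IsTree) {u v w w' : V} (h : IsLCA T r u v w)
    (h' : IsLCA T r u v w') : w = w' := by
  have hd : T.dist r w = T.dist r w' :=
    le_antisymm (h'.2.2 w h.1 h.2.1) (h.2.2 w' h'.1 h'.2.1)
  rcases anc_comparable hT h.1 h'.1 with hc | hc
  · exact anc_eq_of_depth hT hc hd
  · exact (anc_eq_of_depth hT hc hd.symm).symm

lemma exists_lca (hT : T.IsTree) [Finite V] (u v : V) : ∃ w, IsLCA T r u v w := by
  have hr : r ∈ {w | InSubtree T r w u ∧ InSubtree T r w v} := by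
    constructor <;> · intro p hp; exact p.start_mem_support
  obtain ⟨m, hm, hmax⟩ := Set.Finite.exists_maximalFor (T.dist r)
    {w | InSubtree T r w u ∧ InSubtree T r w v} (Set.toFinite _) ⟨r, hr⟩
  refine ⟨m, hm.1, hm.2, fun w' h1 h2 => ?_⟩
  rcases le_total (T.dist r w') (T.dist r m) with h | h
  · exact h
  · exact hmax ⟨h1, h2⟩ h

lemma key (hT : T.IsTree) [Finite V] (r : V) (X : Set V) :
    ∃ Y : Set V, X ⊆ Y ∧ LCAClosed T r Y ∧ Y.ncard ≤ 2 * X.ncard := by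
  refine Set.Finite.induction_on
    (motive := fun X _ => ∃ Y : Set V, X ⊆ Y ∧ LCAClosed T r Y ∧ Y.ncard ≤ 2 * X.ncard)
    X (Set.toFinite X) ⟨∅, subset_rfl, fun u hu => absurd hu (Set.notMem_empty u), by simp⟩ ?_
  intro x s hx _hs ih
  obtain ⟨Y, hsY, hYc, hYcard⟩ := ih
  rcases Set.eq_empty_or_nonempty Y with hYe | ⟨y₀, hy₀⟩
  · subst hYe
    have hse : s = ∅ := Set.subset_empty_iff.mp hsY
    subst hse
    refine ⟨{x}, by simp, ?_, ?_⟩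
    · intro u hu v hv w hw
      rcases hu with rfl
      rcases hv with rfl
      have := lca_unique hT hw (isLCA_of_anc hT (anc_refl hT _))
      simp [this]
    · simp
  · -- choose lca of x with each y
    have hℓ : ∀ y : V, IsLCA T r x y (Classical.choose (exists_lca hT x y)) :=
      fun y => Classical.choose_spec (exists_lca hT x y)
    set ℓ : V → V := fun y => Classical.choose (exists_lca hT x y) with hℓdef
    set A : Set V := ℓ '' Y with hA
    obtain ⟨m, hmA, hmax⟩ := Set.Finite.exists_maximalFor (T.dist r) A
      (Set.toFinite _) ⟨ℓ y₀, ⟨y₀, hy₀, rfl⟩⟩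
    have hAle : ∀ a ∈ A, T.dist r a ≤ T.dist r m := by
      intro a ha
      rcases le_total (T.dist r a) (T.dist r m) with h | h
      · exact h
      · exact hmax ha h
    obtain ⟨ym, hymY, hym⟩ := hmA
    have hmlca : IsLCA T r x ym m := hym ▸ hℓ ym
    have hmx : InSubtree T r m x := hmlca.1
    have hmym : InSubtree T r m ym := hmlca.2.1
    have hC1 : ∀ y ∈ Y, ∀ a, IsLCA T r x y a → a ∈ insert m Y := by
      intro y hy a ha
      have haly : a = ℓ y := lca_unique hT ha (hℓ y)
      have hda : T.dist r a ≤ T.dist r m := hAle a ⟨y, hy, haly.symm⟩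
      by_cases ham : a = m
      · exact Or.inl ham
      have haam : InSubtree T r a m := by
        rcases anc_comparable hT ha.1 hmx with h | h
        · exact h
        · exact absurd (anc_eq_of_depth hT h (le_antisymm (anc_depth_le hT h) hda)).symm ham
      have hkey : IsLCA T r ym y a := by
        refine ⟨anc_trans hT haam hmym, ha.2.1, ?_⟩
        intro c hcym hcy
        rcases anc_comparable hT hcym hmym with hcm | hmc
        · exact ha.2.2 c (anc_trans hT hcm hmx) hcy
        · exfalso
          apply ham
          have h1 : T.dist r m ≤ T.dist r a := ha.2.2 m hmx (anc_trans hT hmc hcy)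
          exact anc_eq_of_depth hT haam (le_antisymm (anc_depth_le hT haam) h1)
      exact Or.inr (hYc ym hymY y hy a hkey)
    have hC2 : ∀ y ∈ Y, ∀ a, IsLCA T r m y a → a ∈ insert m Y := by
      intro y hy a ha
      by_cases hmy : InSubtree T r m y
      · have hm' : IsLCA T r m y m :=
          ⟨anc_refl hT m, hmy, fun c hcm _ => anc_depth_le hT hcm⟩
        exact Or.inl (lca_unique hT ha hm')
      · refine hC1 y hy a ⟨anc_trans hT ha.1 hmx, ha.2.1, ?_⟩
        intro c hcx hcy
        rcases anc_comparable hT hcx hmx with hcm | hmc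
        · exact ha.2.2 c hcm hcy
        · exact absurd (anc_trans hT hmc hcy) hmy
    refine ⟨insert x (insert m Y), ?_, ?_, ?_⟩
    · exact Set.insert_subset_insert (hsY.trans (Set.subset_insert m Y))
    · intro u hu v hv w hw
      have lift : w ∈ insert m Y → w ∈ insert x (insert m Y) := fun h => Or.inr h
      rcases hu with rfl | hu
      · -- u = x
        rcases hv with rfl | hv
        · have := lca_unique hT hw (isLCA_of_anc hT (anc_refl hT _))
          exact Or.inl this
        rcases hv with rfl | hv
        · exact lift (Or.inl (lca_unique hT hw (isLCA_of_anc hT hmx)))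
        · exact lift (hC1 v hv w hw)
      rcases hu with rfl | hu
      · -- u = m
        rcases hv with rfl | hv
        · exact lift (Or.inl (lca_unique hT (lca_symm hw) (isLCA_of_anc hT hmx)))
        rcases hv with rfl | hv
        · exact lift (Or.inl (lca_unique hT hw (isLCA_of_anc hT (anc_refl hT _))))
        · exact lift (hC2 v hv w hw)
      · -- u ∈ Y
        rcases hv with rfl | hv
        · exact lift (hC1 u hu w (lca_symm hw))
        rcases hv with rfl | hv
        · exact lift (hC2 u hu w (lca_symm hw))
        · exact lift (Or.inr (hYc u hu v hv w hw))
    · have h1 : (insert x (insert m Y)).ncard ≤ (insert m Y).ncard + 1 :=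
        Set.ncard_insert_le x _
      have h2 : (insert m Y).ncard ≤ Y.ncard + 1 := Set.ncard_insert_le m Y
      have h3 : (insert x s).ncard = s.ncard + 1 :=
        Set.ncard_insert_of_notMem hx (Set.toFinite s)
      omega

end StmtAux

/-- The lca-closure `X'` of a set `X` in a finite rooted tree satisfies `|X'| ≤ 2|X|`. -/
theorem stmt_1 {V : Type*} [Fintype V] (T : SimpleGraph V) (hT : T.IsTree) (r : V)
    (X X' : Set V) (hsub : X ⊆ X') (hclosed : LCAClosed T r X')
    (hmin : ∀ Y : Set V, X ⊆ Y → LCAClosed T r Y → X' ⊆ Y) :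
    X'.ncard ≤ 2 * X.ncard := by
  classical
  obtain ⟨Y, hXY, hYc, hcard⟩ := StmtAux.key hT r X
  exact le_trans (Set.ncard_le_ncard (hmin Y hXY hYc) (Set.toFinite Y)) hcard
end

section
/- Let T be a finite tree rooted at r with vertex weights wt : V(T) \to \mathbb{N}, and let P \subseteq V(T) \times V(T) be a set of terminal pairs such that every terminal pair path of P passes through r. Let \vec{T} be the directed tree obtained by orienting every edge of T away from r, and define arc weights wt'((u,v)) = wt(v) for each arc (u,v) of \vec{T}. Then a set Z of arcs of \vec{T} is a P-dpc with respect to r in \vec{T} with wt'(Z) = w if and only if the set S = \{v : (u,v) \in Z\} of heads of the arcs of Z is a P-multicut in T with wt(S) = w. -/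
open SimpleGraph

section Aux

open SimpleGraph

variable {V : Type*} [DecidableEq V] {T : SimpleGraph V}

private lemma path_eq (hT : T.IsTree) {u v : V} {p q : T.Walk u v}
    (hp : p.IsPath) (hq : q.IsPath) : p = q :=
  (hT.existsUnique_path u v).unique hp hq

private lemma concat_eq (hT : T.IsTree) {r a b : V} (hab : T.Adj a b)
    {p : T.Walk r b} (hp : p.IsPath) (ha : a ∈ p.support) :
    p = (p.takeUntil a ha).concat hab := by
  have hq : (p.takeUntil a ha).IsPath := hp.takeUntil ha
  have hnd : ((p.takeUntil a ha).support ++ (p.dropUntil a ha).support.tail).Nodup := by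
    rw [← SimpleGraph.Walk.support_append, SimpleGraph.Walk.take_spec]
    exact hp.support_nodup
  have hb : b ∉ (p.takeUntil a ha).support := by
    intro hbmem
    have hdisj := (List.nodup_append'.mp hnd).2.2
    have hbt : b ∈ (p.dropUntil a ha).support.tail := by
      have hb1 : b ∈ (p.dropUntil a ha).support := SimpleGraph.Walk.end_mem_support _
      rw [SimpleGraph.Walk.support_eq_cons, List.mem_cons] at hb1
      rcases hb1 with h1 | h1
      · exact absurd h1.symm hab.ne
      · exact h1
    exact hdisj hbmem hbt
  have hcp : ((p.takeUntil a ha).concat hab).IsPath := by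
    rw [SimpleGraph.Walk.isPath_def, SimpleGraph.Walk.support_concat]
    simpa [List.concat_eq_append, List.nodup_append] using ⟨hq.support_nodup, fun x hx hxb => hb (hxb ▸ hx)⟩
  exact path_eq hT hp hcp

private lemma parent_unique (hT : T.IsTree) {r a a' b : V} (h : T.Adj a b)
    (hs : InSubtree T r a b) (h' : T.Adj a' b) (hs' : InSubtree T r a' b) : a = a' := by
  obtain ⟨p, hp, -⟩ := hT.existsUnique_path r b
  have e1 := concat_eq hT h hp (hs p hp)
  have e2 := concat_eq hT h' hp (hs' p hp)
  have d1 : p.darts.getLast? = some ⟨(a, b), h⟩ := by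
    conv_lhs => rw [e1]
    rw [SimpleGraph.Walk.darts_concat, List.concat_eq_append, List.getLast?_append,
      List.getLast?_singleton]
    rfl
  have d2 : p.darts.getLast? = some ⟨(a', b), h'⟩ := by
    conv_lhs => rw [e2]
    rw [SimpleGraph.Walk.darts_concat, List.concat_eq_append, List.getLast?_append,
      List.getLast?_singleton]
    rfl
  rw [d1] at d2
  have h3 : (⟨(a, b), h⟩ : T.Dart) = ⟨(a', b), h'⟩ := Option.some_injective _ d2
  exact congrArg (fun d : T.Dart => d.fst) h3

private lemma reach_of_clean (hT : T.IsTree) {r : V} (Z : Finset (V × V)) :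
    ∀ {y x : V} (p : T.Walk y x), y = r → p.IsPath →
      (∀ d ∈ p.darts, (d.fst, d.snd) ∉ Z) →
      Relation.ReflTransGen
        (fun a b : V => (T.Adj a b ∧ InSubtree T r a b) ∧ (a, b) ∉ Z) y x := by
  intro y x p
  induction p using SimpleGraph.Walk.concatRec with
  | Hnil => exact fun _ _ _ => Relation.ReflTransGen.refl
  | @Hconcat u v w q h ih =>
    intro hy hp hd
    subst hy
    have hnd := hp.support_nodup
    rw [SimpleGraph.Walk.support_concat] at hnd
    have hq : q.IsPath := (SimpleGraph.Walk.isPath_def _).2 (List.nodup_append'.mp hnd).1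
    have hw : w ∉ q.support := fun hmem =>
      (List.nodup_append'.mp hnd).2.2 hmem (List.mem_singleton_self _)
    have ihh := ih rfl hq (fun d hd' => hd d (by
      rw [SimpleGraph.Walk.darts_concat, List.concat_eq_append]
      exact List.mem_append_left _ hd'))
    refine Relation.ReflTransGen.tail ihh ⟨⟨h, ?_⟩, ?_⟩
    · intro pp hpp
      have hppe : pp = q.concat h := path_eq hT hpp hp
      rw [hppe, SimpleGraph.Walk.support_concat]
      exact List.mem_append_left _ q.end_mem_support
    · exact hd ⟨(v, w), h⟩ (by
        rw [SimpleGraph.Walk.darts_concat, List.concat_eq_append]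
        exact List.mem_append_right _ (List.mem_singleton_self _))

private lemma walk_of_reach {r x : V} (Z : Finset (V × V))
    (h : Relation.ReflTransGen
      (fun a b : V => (T.Adj a b ∧ InSubtree T r a b) ∧ (a, b) ∉ Z) r x) :
    ∃ W : T.Walk r x, ∀ d ∈ W.darts,
      (T.Adj d.fst d.snd ∧ InSubtree T r d.fst d.snd) ∧ (d.fst, d.snd) ∉ Z := by
  induction h with
  | refl => exact ⟨SimpleGraph.Walk.nil, by simp⟩
  | @tail b c _ hbc ih =>
    obtain ⟨W, hW⟩ := ih
    refine ⟨W.concat hbc.1.1, ?_⟩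
    intro d hd
    rw [SimpleGraph.Walk.darts_concat, List.concat_eq_append, List.mem_append] at hd
    rcases hd with hd | hd
    · exact hW d hd
    · rw [List.mem_singleton] at hd
      subst hd
      exact ⟨⟨hbc.1.1, hbc.1.2⟩, hbc.2⟩

private lemma clean_of_reach (hT : T.IsTree) {r x : V} {Z : Finset (V × V)}
    (hZ : ∀ e ∈ Z, T.Adj e.1 e.2 ∧ InSubtree T r e.1 e.2)
    (h : Relation.ReflTransGen
      (fun a b : V => (T.Adj a b ∧ InSubtree T r a b) ∧ (a, b) ∉ Z) r x) :
    ∃ p : T.Walk r x, p.IsPath ∧ ∀ v ∈ p.support, ∀ a, (a, v) ∉ Z := by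
  obtain ⟨W, hW⟩ := walk_of_reach Z h
  refine ⟨W.bypass, W.bypass_isPath, ?_⟩
  intro v hv a hav
  obtain ⟨hadj, hsub⟩ := hZ _ hav
  have hvr : v ≠ r := by
    intro hveq
    rw [hveq] at hsub hadj
    have har : a = r := by
      simpa using hsub SimpleGraph.Walk.nil SimpleGraph.Walk.IsPath.nil
    exact T.irrefl (har ▸ hadj)
  have hv' : v ∈ W.bypass.support.tail := by
    rw [SimpleGraph.Walk.support_eq_cons, List.mem_cons] at hv
    rcases hv with hv | hv
    · exact absurd hv hvr
    · exact hv
  rw [← SimpleGraph.Walk.map_snd_darts] at hv'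
  obtain ⟨d, hd, hdv⟩ := List.mem_map.mp hv'
  have hdW := W.darts_bypass_subset hd
  obtain ⟨⟨hadj', hsub'⟩, hnz⟩ := hW d hdW
  have had : a = d.fst := parent_unique hT hadj hsub (hdv ▸ hadj') (hdv ▸ hsub')
  exact hnz (by rw [← had, hdv]; exact hav)

end Aux

/-- Orient the tree away from `r` and give each arc the weight of its head.
If every terminal pair path passes through `r`, then a set `Z` of arcs is a
`P`-dpc w.r.t. `r` of weight `w` iff the set of heads of `Z` is a `P`-multicut
of weight `w`.  An arc of the oriented tree from `a` to `b` is an adjacent pair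
with `a` on the `(r,b)`-path; directed reachability avoiding `Z` is the
reflexive-transitive closure of the arc relation restricted to arcs outside `Z`. -/
theorem stmt_3 {V : Type*} [Fintype V] [DecidableEq V] (T : SimpleGraph V)
    (hT : T.IsTree) (r : V) (P : Set (V × V))
    (hthrough : ∀ s t : V, (s, t) ∈ P → OnPath T s t r)
    (wt : V → ℕ) (Z : Finset (V × V))
    (hZ : ∀ e ∈ Z, T.Adj e.1 e.2 ∧ InSubtree T r e.1 e.2) (w : ℕ) :
    ((∀ s t : V, (s, t) ∈ P →
        Relation.ReflTransGen
          (fun a b : V => (T.Adj a b ∧ InSubtree T r a b) ∧ (a, b) ∉ Z) r s →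
        ¬ Relation.ReflTransGen
          (fun a b : V => (T.Adj a b ∧ InSubtree T r a b) ∧ (a, b) ∉ Z) r t) ∧
      ∑ e ∈ Z, wt e.2 = w) ↔
    (IsMulticut T P ↑(Z.image Prod.snd) ∧ ∑ v ∈ Z.image Prod.snd, wt v = w) := by
  classical
  have hsum : ∑ v ∈ Z.image Prod.snd, wt v = ∑ e ∈ Z, wt e.2 := by
    refine Finset.sum_image ?_
    intro e he e' he' hee
    have h1 := hZ e he
    have h2 := hZ e' he'
    rw [← hee] at h2
    exact Prod.ext (parent_unique hT h1.1 h1.2 h2.1 h2.2) hee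
  rw [hsum]
  constructor
  · rintro ⟨hdpc, hw⟩
    refine ⟨?_, hw⟩
    intro s t hst p hp
    have hrp : r ∈ p.support := hthrough s t hst p hp
    by_contra hcon
    push_neg at hcon
    by_cases hrs : Relation.ReflTransGen
        (fun a b : V => (T.Adj a b ∧ InSubtree T r a b) ∧ (a, b) ∉ Z) r s
    · refine hdpc s t hst hrs ?_
      refine reach_of_clean hT Z (p.dropUntil r hrp) rfl (hp.dropUntil hrp) ?_
      intro d hd hdz
      refine hcon d.snd (Finset.mem_coe.2 (Finset.mem_image.2 ⟨(d.fst, d.snd), hdz, rfl⟩)) ?_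
      exact p.support_dropUntil_subset hrp
        (SimpleGraph.Walk.dart_snd_mem_support_of_mem_darts _ hd)
    · refine hrs ?_
      refine reach_of_clean hT Z (p.takeUntil r hrp).reverse rfl (hp.takeUntil hrp).reverse ?_
      intro d hd hdz
      have hmem : d.snd ∈ (p.takeUntil r hrp).reverse.support :=
        SimpleGraph.Walk.dart_snd_mem_support_of_mem_darts _ hd
      rw [SimpleGraph.Walk.support_reverse, List.mem_reverse] at hmem
      exact hcon d.snd (Finset.mem_coe.2 (Finset.mem_image.2 ⟨(d.fst, d.snd), hdz, rfl⟩))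
        (p.support_takeUntil_subset hrp hmem)
  · rintro ⟨hmc, hw⟩
    refine ⟨?_, hw⟩
    intro s t hst hrs hrt
    obtain ⟨ps, hps, hcs⟩ := clean_of_reach hT hZ hrs
    obtain ⟨pt, hpt, hct⟩ := clean_of_reach hT hZ hrt
    obtain ⟨v, hvS, hvsup⟩ := hmc s t hst (ps.reverse.append pt).bypass
      (ps.reverse.append pt).bypass_isPath
    have hvW : v ∈ (ps.reverse.append pt).support :=
      (ps.reverse.append pt).support_bypass_subset hvsup
    rw [SimpleGraph.Walk.support_append, List.mem_append] at hvW
    obtain ⟨a, hav⟩ : ∃ a, (a, v) ∈ Z := by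
      obtain ⟨e, he, he2⟩ := Finset.mem_image.1 (Finset.mem_coe.1 hvS)
      exact ⟨e.1, by rw [← he2]; simpa using he⟩
    rcases hvW with hvW | hvW
    · rw [SimpleGraph.Walk.support_reverse, List.mem_reverse] at hvW
      exact hcs v hvW a hav
    · exact hct v (List.mem_of_mem_tail hvW) a hav
end

section
/- Let T be a finite tree, P \subseteq V(T) \times V(T) a set of terminal pairs, and let Q be a path in T such that no terminal pair path of P is contained in Q. Let T' = T / E(Q) be the tree obtained by contracting all edges of Q, let y^\circ be the vertex onto which Q is contracted, and let P' = P / E(Q) be the corresponding set of terminal pairs in T'. Then a set S \subseteq V(T) with S \cap V(Q) = \emptyset (which is naturally a subset of V(T') \setminus \{y^\circ\}) is a P-multicut in T if and only if it is a P'-multicut in T'. -/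
open SimpleGraph

/-!
Every walk in `T` pushes forward along `ψ` to a walk in `T'` (edges inside `Q` collapse), and
every walk in `T'` lifts back to a walk in `T` whose vertices map into it, because the fibres of
`ψ` (the vertices of `Q`, resp. single vertices) are connected. In the tree `T` a vertex on the
`(s,t)`-path lies on every `(s,t)`-walk, so a cut vertex of `P` survives into `T'`; conversely a
cut vertex `ψ v` of `P/E(Q)` has `v ∉ Q`, so it is hit only by `v` itself.
-/

namespace SimpleGraph

variable {V V' : Type*} {G : SimpleGraph V} {G' : SimpleGraph V'}

lemma IsAcyclic.mem_support_of_mem_support_isPath (hG : G.IsAcyclic) {s t v : V}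
    {p : G.Walk s t} (hp : p.IsPath) (hv : v ∈ p.support) (w : G.Walk s t) :
    v ∈ w.support := by
  classical
  have : p = w.bypass := congrArg Subtype.val
    ((hG.subsingleton_path s t).elim ⟨p, hp⟩ ⟨w.bypass, w.bypass_isPath⟩)
  exact w.support_bypass_subset_support (this ▸ hv)

namespace Walk

lemma exists_push (ψ : V → V')
    (hpush : ∀ u v : V, G.Adj u v → ψ u ≠ ψ v → G'.Adj (ψ u) (ψ v)) {a b : V}
    (p : G.Walk a b) : ∃ w : G'.Walk (ψ a) (ψ b), ∀ z ∈ w.support, ∃ u ∈ p.support, ψ u = z := by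
  induction p with
  | nil => exact ⟨nil, by simp⟩
  | @cons a c b h p ih =>
    obtain ⟨w, hw⟩ := ih
    by_cases he : ψ a = ψ c
    · refine ⟨w.copy he.symm rfl, fun z hz => ?_⟩
      obtain ⟨u, hu, rfl⟩ := hw z (by simpa using hz)
      exact ⟨u, by simp [hu], rfl⟩
    · refine ⟨cons (hpush a c h he) w, fun z hz => ?_⟩
      rcases List.mem_cons.1 (support_cons _ _ ▸ hz) with rfl | hz
      · exact ⟨a, by simp, rfl⟩
      · obtain ⟨u, hu, rfl⟩ := hw z hz
        exact ⟨u, by simp [hu], rfl⟩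

lemma exists_lift (ψ : V → V')
    (hfib : ∀ s u : V, ψ s = ψ u → ∃ w : G.Walk s u, ∀ z ∈ w.support, ψ z = ψ s)
    (hlift : ∀ a b : V', G'.Adj a b → ∃ u v : V, G.Adj u v ∧ ψ u = a ∧ ψ v = b) {a b : V'}
    (p : G'.Walk a b) (s t : V) (hs : ψ s = a) (ht : ψ t = b) :
    ∃ w : G.Walk s t, ∀ z ∈ w.support, ψ z ∈ p.support := by
  induction p generalizing s with
  | nil =>
    obtain ⟨w, hw⟩ := hfib s t (hs.trans ht.symm)
    exact ⟨w, fun z hz => by simp [hw z hz, hs]⟩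
  | @cons a c b h p ih =>
    obtain ⟨u, v, huv, rfl, rfl⟩ := hlift a c h
    obtain ⟨w₁, hw₁⟩ := hfib s u hs
    obtain ⟨w₂, hw₂⟩ := ih v rfl ht
    refine ⟨w₁.append (cons huv w₂), fun z hz => ?_⟩
    rcases (mem_support_append_iff _ _).1 hz with hz | hz
    · simp [hw₁ z hz, hs]
    · rcases List.mem_cons.1 (support_cons _ _ ▸ hz) with rfl | hz
      · simp
      · simp [hw₂ z hz]

end Walk

lemma exists_walk_in_fiber_of_collapse {y x : V} (Q : G.Walk y x) (ψ : V → V') (y0 : V')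
    (hψQ : ∀ u ∈ Q.support, ψ u = y0)
    (hψn : ∀ u : V, u ∉ Q.support → ψ u ≠ y0)
    (hψinj : ∀ u v : V, u ∉ Q.support → v ∉ Q.support → ψ u = ψ v → u = v)
    (s u : V) (h : ψ s = ψ u) : ∃ w : G.Walk s u, ∀ z ∈ w.support, ψ z = ψ s := by
  classical
  by_cases hy : ψ s = y0
  · have hsQ : s ∈ Q.support := by_contra fun hc => hψn s hc hy
    have huQ : u ∈ Q.support := by_contra fun hc => hψn u hc (h ▸ hy)
    refine ⟨(Q.takeUntil s hsQ).reverse.append (Q.takeUntil u huQ), fun z hz => ?_⟩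
    have hzQ : z ∈ Q.support := by
      rcases (Walk.mem_support_append_iff _ _).1 hz with hz | hz
      · exact Walk.support_takeUntil_subset_support _ _ (by simpa using hz)
      · exact Walk.support_takeUntil_subset_support _ _ hz
    rw [hψQ z hzQ, hy]
  · obtain rfl : s = u :=
      hψinj s u (fun hc => hy (hψQ s hc)) (fun hc => hy (h ▸ hψQ u hc)) h
    exact ⟨Walk.nil, by simp⟩

end SimpleGraph

section Multicut

variable {V V' : Type*} {G : SimpleGraph V} {G' : SimpleGraph V'}

lemma IsMulticut.image (hG : G.IsTree) {P : Set (V × V)} {S : Set V} (hM : IsMulticut G P S)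
    (ψ : V → V')
    (hlift : ∀ {a b : V'} (p : G'.Walk a b) (s t : V), ψ s = a → ψ t = b →
      ∃ w : G.Walk s t, ∀ z ∈ w.support, ψ z ∈ p.support) :
    IsMulticut G' {q : V' × V' | ∃ s t : V, (s, t) ∈ P ∧ q = (ψ s, ψ t)} (ψ '' S) := by
  classical
  rintro _ _ ⟨s, t, hst, heq⟩ p -
  obtain ⟨rfl, rfl⟩ := Prod.mk.inj heq
  obtain ⟨w₀⟩ := hG.connected.preconnected s t
  obtain ⟨v, hvS, hv⟩ := hM s t hst w₀.bypass w₀.bypass_isPath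
  obtain ⟨w, hw⟩ := hlift p s t rfl rfl
  exact ⟨ψ v, ⟨v, hvS, rfl⟩, hw v (hG.isAcyclic.mem_support_of_mem_support_isPath
    w₀.bypass_isPath hv w)⟩

lemma IsMulticut.of_image {P : Set (V × V)} {S : Set V} (ψ : V → V')
    (hpush : ∀ u v : V, G.Adj u v → ψ u ≠ ψ v → G'.Adj (ψ u) (ψ v))
    (hS : ∀ u v : V, v ∈ S → ψ u = ψ v → u = v)
    (hM : IsMulticut G' {q : V' × V' | ∃ s t : V, (s, t) ∈ P ∧ q = (ψ s, ψ t)} (ψ '' S)) :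
    IsMulticut G P S := by
  classical
  intro s t hst p _
  obtain ⟨w, hw⟩ := p.exists_push ψ hpush
  obtain ⟨_, ⟨v, hvS, rfl⟩, hv⟩ := hM (ψ s) (ψ t) ⟨s, t, hst, rfl⟩ w.bypass w.bypass_isPath
  obtain ⟨u, hu, huv⟩ := hw (ψ v) (w.support_bypass_subset_support hv)
  exact ⟨v, hvS, hS u v hvS huv ▸ hu⟩

end Multicut

theorem stmt_7_general {V V' : Type*} (T : SimpleGraph V)
    (hT : T.IsTree) (T' : SimpleGraph V')
    (P : Set (V × V)) (y x : V) (Q : T.Walk y x)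
    (ψ : V → V') (y0 : V')
    (hψQ : ∀ u ∈ Q.support, ψ u = y0)
    (hψn : ∀ u : V, u ∉ Q.support → ψ u ≠ y0)
    (hψinj : ∀ u v : V, u ∉ Q.support → v ∉ Q.support → ψ u = ψ v → u = v)
    (hadj : ∀ a b : V', T'.Adj a b ↔ a ≠ b ∧ ∃ u v : V, T.Adj u v ∧ ψ u = a ∧ ψ v = b)
    (S : Set V) (hS : ∀ u ∈ S, u ∉ Q.support) :
    IsMulticut T P S ↔
      IsMulticut T' {q : V' × V' | ∃ s t : V, (s, t) ∈ P ∧ q = (ψ s, ψ t)} (ψ '' S) := by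
  have hfib := exists_walk_in_fiber_of_collapse Q ψ y0 hψQ hψn hψinj
  have hinjS : ∀ u v : V, v ∈ S → ψ u = ψ v → u = v := fun u v hvS huv =>
    have huQ : u ∉ Q.support := fun hu => hψn v (hS v hvS) (huv ▸ hψQ u hu)
    hψinj u v huQ (hS v hvS) huv
  exact ⟨fun hM => hM.image hT ψ fun p => p.exists_lift ψ hfib fun a b h => ((hadj a b).1 h).2,
    IsMulticut.of_image ψ (fun u v h hne => (hadj _ _).2 ⟨hne, u, v, h, rfl, rfl⟩) hinjS⟩

/-- Contracting a path `Q` of a tree that contains no terminal pair path: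
a set `S` disjoint from `Q` is a `P`-multicut in `T` iff its image is a
`P/E(Q)`-multicut in `T/E(Q)`.  The contraction is modelled by a surjection
`ψ` sending exactly `V(Q)` to the contraction vertex `y0`, injective elsewhere,
with the adjacencies of the contracted graph. -/
theorem stmt_7 {V V' : Type*} [Fintype V] [Fintype V'] (T : SimpleGraph V)
    (hT : T.IsTree) (T' : SimpleGraph V') (hT' : T'.IsTree)
    (P : Set (V × V)) (y x : V) (Q : T.Walk y x) (hQ : Q.IsPath)
    (hnc : ∀ s t : V, (s, t) ∈ P → ∀ p : T.Walk s t, p.IsPath →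
      ¬ ∀ u ∈ p.support, u ∈ Q.support)
    (ψ : V → V') (y0 : V')
    (hψQ : ∀ u ∈ Q.support, ψ u = y0)
    (hψn : ∀ u : V, u ∉ Q.support → ψ u ≠ y0)
    (hψinj : ∀ u v : V, u ∉ Q.support → v ∉ Q.support → ψ u = ψ v → u = v)
    (hψsurj : Function.Surjective ψ)
    (hadj : ∀ a b : V', T'.Adj a b ↔ a ≠ b ∧ ∃ u v : V, T.Adj u v ∧ ψ u = a ∧ ψ v = b)
    (S : Set V) (hS : ∀ u ∈ S, u ∉ Q.support) :
    IsMulticut T P S ↔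
      IsMulticut T' {q : V' × V' | ∃ s t : V, (s, t) ∈ P ∧ q = (ψ s, ψ t)} (ψ '' S) :=
  stmt_7_general T hT T' P y x Q ψ y0 hψQ hψn hψinj hadj S hS
end

section
/- Let (T, P, wt, w, k) be an instance of Weighted Multicut on Tree with T rooted at r, let X be a P-multicut in T closed under taking least common ancestors with |X| \ge 2, let x \in X be furthest from r, and let y \in X be its unique closest ancestor in X. Define: (i) the instance I_1 = (T/E(P_{y,x}), P/E(P_{y,x}), wt_1, w, k) where the contraction vertex y^\circ gets weight wt_1(y^\circ) = w+1 and all other vertices keep their weight, together with the multicut X_1 = (X \setminus \{x,y\}) \cup \{y^\circ\}; and (ii) for each i \in \{0,1,\dots,k\}, the instance I_{2,i} = (T_2, P_2, wt_{2,i}, w, k-i) with T_2 = T \setminus T^\dag_x, P_2 = (P|_{T_2} \setminus (V(T^\dag_{y,x}) \times V(T^\dag_{y,x}))) \cup \{(y,x)\}, and wt_{2,i}(v) = wt(v) + m_i(v) for v \in V(P_{y,x}) and wt_{2,i}(v) = wt(v) otherwise, where m_i(v) is the minimum wt-weight of a P|_{T^\dag_{v,x}}-multicut of size at most i (and +\infty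 if none exists). Then T has a P-multicut of size at most k and wt-weight at most w if and only if I_1 has a P_1-multicut of size at most k and wt_1-weight at most w, or for some i \in \{0,\dots,k\} the instance I_{2,i} has a P_2-multicut of size at most k-i and wt_{2,i}-weight at most w. -/
open SimpleGraph

set_option linter.unusedSectionVars false

namespace MCkit

open SimpleGraph

variable {V : Type*} [DecidableEq V] {T : SimpleGraph V}

noncomputable def upath (hT : T.IsTree) (a b : V) : T.Walk a b :=
  (hT.existsUnique_path a b).exists.choose

lemma upath_isPath (hT : T.IsTree) (a b : V) : (upath hT a b).IsPath :=
  (hT.existsUnique_path a b).exists.choose_spec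

lemma path_eq (hT : T.IsTree) {a b : V} {p : T.Walk a b} (hp : p.IsPath) :
    p = upath hT a b :=
  (hT.existsUnique_path a b).unique hp (upath_isPath hT a b)

lemma mem_sep (hT : T.IsTree) {a b v : V} (h : v ∈ (upath hT a b).support)
    (p : T.Walk a b) : v ∈ p.support :=
  p.support_bypass_subset ((path_eq hT p.bypass_isPath) ▸ h)

lemma upath_symm_mem (hT : T.IsTree) {a b v : V} :
    v ∈ (upath hT a b).support ↔ v ∈ (upath hT b a).support := by
  constructor
  · intro h
    simpa [Walk.support_reverse] using mem_sep hT h (upath hT b a).reverse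
  · intro h
    simpa [Walk.support_reverse] using mem_sep hT h (upath hT a b).reverse

lemma upath_self (hT : T.IsTree) (a : V) : upath hT a a = Walk.nil :=
  (path_eq hT Walk.IsPath.nil).symm

lemma onPath_iff (hT : T.IsTree) {a b v : V} :
    OnPath T a b v ↔ v ∈ (upath hT a b).support := by
  constructor
  · intro h; exact h _ (upath_isPath hT a b)
  · intro h p hp; rw [path_eq hT hp]; exact h

lemma inSub_iff (hT : T.IsTree) {r v u : V} :
    InSubtree T r v u ↔ v ∈ (upath hT r u).support := onPath_iff hT

lemma inSub_self (hT : T.IsTree) (r u : V) : InSubtree T r u u :=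
  (inSub_iff hT).mpr (Walk.end_mem_support _)

lemma inSub_root (hT : T.IsTree) (r u : V) : InSubtree T r r u :=
  (inSub_iff hT).mpr (Walk.start_mem_support _)

lemma split (hT : T.IsTree) {a b v : V} (h : v ∈ (upath hT a b).support) :
    (upath hT a v).append (upath hT v b) = upath hT a b := by
  have h1 : ((upath hT a b).takeUntil v h) = upath hT a v :=
    path_eq hT ((upath_isPath hT a b).takeUntil h)
  have h2 : ((upath hT a b).dropUntil v h) = upath hT v b :=
    path_eq hT ((upath_isPath hT a b).dropUntil h)
  rw [← h1, ← h2, Walk.take_spec]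

lemma mem_split_iff (hT : T.IsTree) {a b v z : V} (h : v ∈ (upath hT a b).support) :
    z ∈ (upath hT a b).support ↔
      z ∈ (upath hT a v).support ∨ z ∈ (upath hT v b).support := by
  rw [← split hT h, Walk.mem_support_append_iff]

lemma disj_split (hT : T.IsTree) {a b v z : V} (h : v ∈ (upath hT a b).support)
    (h1 : z ∈ (upath hT a v).support) (h2 : z ∈ (upath hT v b).support) : z = v := by
  have hp : ((upath hT a v).append (upath hT v b)).IsPath := by
    rw [split hT h]; exact upath_isPath hT a b
  rw [Walk.isPath_def, Walk.support_append, List.nodup_append'] at hp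
  by_contra hne
  have hz2 : z ∈ (upath hT v b).support.tail := by
    have hc := (upath hT v b).support_eq_cons
    rw [hc] at h2
    rcases List.mem_cons.mp h2 with h2' | h2'
    · exact absurd h2' hne
    · exact h2'
  exact hp.2.2 h1 hz2

lemma isPath_of_append_left {a b c : V} {p : T.Walk a b} {q : T.Walk b c}
    (h : (p.append q).IsPath) : p.IsPath := by
  rw [Walk.isPath_def] at h ⊢
  rw [Walk.support_append] at h
  exact h.of_append_left

lemma dist_eq (hT : T.IsTree) (a b : V) : T.dist a b = (upath hT a b).length := by
  obtain ⟨p, hp, hl⟩ := (hT.isConnected.preconnected a b).exists_path_of_dist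
  rw [← hl, path_eq hT hp]

lemma anc_dist_lt (hT : T.IsTree) {r u v : V} (h : v ∈ (upath hT r u).support)
    (hne : v ≠ u) : T.dist r v < T.dist r u := by
  have hs := split hT h
  have hlen : (upath hT r v).length + (upath hT v u).length = (upath hT r u).length := by
    rw [← hs, Walk.length_append]
  have hnz : (upath hT v u).length ≠ 0 := fun h0 => hne (Walk.eq_of_length_eq_zero h0)
  rw [dist_eq hT, dist_eq hT]
  omega

lemma anc_antisymm (hT : T.IsTree) {r a b : V} (h1 : InSubtree T r a b)
    (h2 : InSubtree T r b a) : a = b := by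
  by_contra hne
  have l1 := anc_dist_lt hT ((inSub_iff hT).mp h1) hne
  have l2 := anc_dist_lt hT ((inSub_iff hT).mp h2) (Ne.symm hne)
  omega

lemma sep_subtree (hT : T.IsTree) {r v s t : V} (hs : InSubtree T r v s)
    (ht : ¬ InSubtree T r v t) : v ∈ (upath hT s t).support := by
  rw [inSub_iff hT] at hs ht
  have hw : v ∈ ((upath hT r t).append (upath hT t s)).support :=
    mem_sep hT hs _
  rcases (Walk.mem_support_append_iff _ _).mp hw with h | h
  · exact absurd h ht
  · exact (upath_symm_mem hT).mpr h

lemma subtree_convex (hT : T.IsTree) {r u a b z : V} (ha : InSubtree T r u a)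
    (hb : InSubtree T r u b) (hz : z ∈ (upath hT a b).support) : InSubtree T r u z := by
  by_contra hnz
  have h1 : u ∈ (upath hT a z).support := sep_subtree hT ha hnz
  have h2 : u ∈ (upath hT z b).support :=
    (upath_symm_mem hT).mpr (sep_subtree hT hb hnz)
  have := disj_split hT hz h1 h2
  exact hnz (this ▸ inSub_self hT r z)

lemma anc_step (hT : T.IsTree) {r a b w : V} (hab : InSubtree T r a b)
    (hw : w ∈ (upath hT a b).support) : InSubtree T r a w := by
  have hsplit1 : (upath hT r a).append (upath hT a b) = upath hT r b :=
    split hT ((inSub_iff hT).mp hab)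
  have hsplit2 : (upath hT a w).append (upath hT w b) = upath hT a b := split hT hw
  have hassoc : ((upath hT r a).append (upath hT a w)).append (upath hT w b)
      = upath hT r b := by
    rw [← Walk.append_assoc, hsplit2, hsplit1]
  have hp : ((upath hT r a).append (upath hT a w)).IsPath := by
    apply isPath_of_append_left (q := upath hT w b)
    rw [hassoc]; exact upath_isPath hT r b
  rw [inSub_iff hT, ← path_eq hT hp, Walk.mem_support_append_iff]
  exact Or.inl (Walk.end_mem_support _)

lemma anc_step2 (hT : T.IsTree) {r a b w : V} (hab : InSubtree T r a b)
    (hw : w ∈ (upath hT a b).support) : InSubtree T r w b := by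
  rw [inSub_iff hT, ← split hT ((inSub_iff hT).mp hab), Walk.mem_support_append_iff]
  exact Or.inr hw

lemma anc_total (hT : T.IsTree) {r a b c : V} (hac : InSubtree T r a c)
    (hbc : InSubtree T r b c) : InSubtree T r a b ∨ InSubtree T r b a := by
  have hb : b ∈ (upath hT r c).support := (inSub_iff hT).mp hbc
  rcases (mem_split_iff hT ((inSub_iff hT).mp hac)).mp hb with h | h
  · exact Or.inr ((inSub_iff hT).mpr h)
  · exact Or.inl (anc_step hT hac h)

lemma mem_sub_path (hT : T.IsTree) {s t z z' : V} (hz : z ∈ (upath hT s t).support)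
    (hz' : z' ∈ (upath hT s t).support) :
    ∀ w ∈ (upath hT z z').support, w ∈ (upath hT s t).support := by
  intro w hw
  rcases (mem_split_iff hT hz).mp hz' with h | h
  · -- z' ∈ upath s z
    have hs2 : (upath hT s z').append (upath hT z' z) = upath hT s z := split hT h
    have hwz : w ∈ (upath hT z' z).support := (upath_symm_mem hT).mp hw
    have : w ∈ (upath hT s z).support := by
      rw [← hs2, Walk.mem_support_append_iff]; exact Or.inr hwz
    exact (mem_split_iff hT hz).mpr (Or.inl this)
  · -- z' ∈ upath z t
    have hs2 : (upath hT z z').append (upath hT z' t) = upath hT z t := split hT h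
    have : w ∈ (upath hT z t).support := by
      rw [← hs2, Walk.mem_support_append_iff]; exact Or.inl hw
    exact (mem_split_iff hT hz).mpr (Or.inr this)

end MCkit
namespace MCkit

open SimpleGraph

variable {V : Type*} [DecidableEq V] {T : SimpleGraph V}

lemma exists_isLCA (hT : T.IsTree) [Fintype V] (r u v : V) : ∃ w, IsLCA T r u v w := by
  classical
  set s : Finset V := Finset.univ.filter (fun w => InSubtree T r w u ∧ InSubtree T r w v)
    with hs
  have hne : s.Nonempty := ⟨r, by simp [hs, inSub_root hT]⟩
  obtain ⟨w, hw, hmax⟩ := s.exists_max_image (fun w => T.dist r w) hne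
  rw [hs, Finset.mem_filter] at hw
  refine ⟨w, hw.2.1, hw.2.2, fun w' h1 h2 => ?_⟩
  exact hmax w' (by simp [hs, h1, h2])

lemma child_dist (hT : T.IsTree) {r w c : V} (hadj : T.Adj w c)
    (hc : c ∉ (upath hT r w).support) :
    w ∈ (upath hT r c).support ∧ T.dist r c = T.dist r w + 1 := by
  set p : T.Walk r c := (upath hT r w).append (Walk.cons hadj Walk.nil) with hp
  have hsupp : p.support = (upath hT r w).support ++ [c] := by
    rw [hp, Walk.support_append, Walk.support_cons, Walk.support_nil]
    rfl
  have hpath : p.IsPath := by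
    rw [Walk.isPath_def, hsupp]
    refine List.nodup_append'.mpr ⟨(upath_isPath hT r w).support_nodup, List.nodup_singleton c, ?_⟩
    intro a ha hb
    rw [List.mem_singleton] at hb
    exact hc (hb ▸ ha)
  have hpe : p = upath hT r c := path_eq hT hpath
  constructor
  · rw [← hpe, hsupp]
    exact List.mem_append_left _ (Walk.end_mem_support _)
  · rw [dist_eq hT r c, ← hpe, hp, Walk.length_append, dist_eq hT r w]
    rfl

lemma median (hT : T.IsTree) {r u v w : V} (h : IsLCA T r u v w) :
    w ∈ (upath hT u v).support := by
  obtain ⟨hwu, hwv, hmax⟩ := h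
  by_cases huw : w = u
  · subst huw; exact Walk.start_mem_support _
  by_cases hvw : w = v
  · subst hvw; exact Walk.end_mem_support _
  obtain ⟨c1, h1, A1, hA⟩ := Walk.exists_eq_cons_of_ne huw (upath hT w u)
  obtain ⟨c2, h2, B1, hB⟩ := Walk.exists_eq_cons_of_ne hvw (upath hT w v)
  have hA1p : A1.IsPath ∧ w ∉ A1.support := by
    have hx := upath_isPath hT w u; rw [hA, Walk.cons_isPath_iff] at hx; exact hx
  have hB1p : B1.IsPath ∧ w ∉ B1.support := by
    have hx := upath_isPath hT w v; rw [hB, Walk.cons_isPath_iff] at hx; exact hx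
  have hwru : w ∈ (upath hT r u).support := (inSub_iff hT).mp hwu
  have hwrv : w ∈ (upath hT r v).support := (inSub_iff hT).mp hwv
  have hsplitu : (upath hT r w).append (upath hT w u) = upath hT r u := split hT hwru
  have hsplitv : (upath hT r w).append (upath hT w v) = upath hT r v := split hT hwrv
  have hc1A : c1 ∈ (upath hT w u).support := by
    rw [hA, Walk.support_cons]; exact List.mem_cons_of_mem _ A1.start_mem_support
  have hc2B : c2 ∈ (upath hT w v).support := by
    rw [hB, Walk.support_cons]; exact List.mem_cons_of_mem _ B1.start_mem_support
  have hc1w : c1 ≠ w := fun hh => hA1p.2 (hh ▸ A1.start_mem_support)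
  have hc2w : c2 ≠ w := fun hh => hB1p.2 (hh ▸ B1.start_mem_support)
  have hc1ru : c1 ∈ (upath hT r u).support := by
    rw [← hsplitu, Walk.mem_support_append_iff]; exact Or.inr hc1A
  have hc2rv : c2 ∈ (upath hT r v).support := by
    rw [← hsplitv, Walk.mem_support_append_iff]; exact Or.inr hc2B
  have hc1nrw : c1 ∉ (upath hT r w).support := fun hmem =>
    hc1w (disj_split hT hwru hmem hc1A)
  have hc2nrw : c2 ∉ (upath hT r w).support := fun hmem =>
    hc2w (disj_split hT hwrv hmem hc2B)
  obtain ⟨hwc1, hd1⟩ := child_dist hT h1 hc1nrw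
  obtain ⟨hwc2, hd2⟩ := child_dist hT h2 hc2nrw
  by_cases hcc : c1 = c2
  · -- c1 is a deeper common ancestor : contradiction
    exfalso
    have hle := hmax c1 ((inSub_iff hT).mpr hc1ru) ((inSub_iff hT).mpr (hcc ▸ hc2rv))
    omega
  · -- the two branches diverge at w, so w is on the u-v path
    have hA1e : A1 = upath hT c1 u := path_eq hT hA1p.1
    have hB1e : B1 = upath hT c2 v := path_eq hT hB1p.1
    set W : T.Walk u v := (upath hT w u).reverse.append (upath hT w v) with hW
    have hWsupp : W.support = (upath hT w u).support.reverse ++ B1.support := by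
      rw [hW, Walk.support_append, Walk.support_reverse, hB, Walk.support_cons]
      rfl
    have hWpath : W.IsPath := by
      rw [Walk.isPath_def, hWsupp]
      refine List.nodup_append'.mpr ⟨List.nodup_reverse.mpr (upath_isPath hT w u).support_nodup,
        hB1p.1.support_nodup, ?_⟩
      intro q hq hq2
      rw [List.mem_reverse] at hq
      rw [hA, Walk.support_cons] at hq
      rcases List.mem_cons.mp hq with rfl | hq1
      · exact hB1p.2 hq2
      · -- q below both c1 and c2 forces c1 = c2
        have hq1' : q ∈ (upath hT c1 u).support := hA1e ▸ hq1
        have hq2' : q ∈ (upath hT c2 v).support := hB1e ▸ hq2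
        have hanc1 : InSubtree T r c1 q := anc_step hT ((inSub_iff hT).mpr hc1ru) hq1'
        have hanc2 : InSubtree T r c2 q := anc_step hT ((inSub_iff hT).mpr hc2rv) hq2'
        rcases anc_total hT hanc1 hanc2 with hh | hh
        · have := anc_dist_lt hT ((inSub_iff hT).mp hh) hcc
          omega
        · have := anc_dist_lt hT ((inSub_iff hT).mp hh) (Ne.symm hcc)
          omega
    have : W = upath hT u v := path_eq hT hWpath
    rw [← this, hW, Walk.mem_support_append_iff]
    left
    rw [Walk.support_reverse, List.mem_reverse]
    exact Walk.start_mem_support _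

end MCkit
namespace MCkit

open SimpleGraph

section QSeg

variable {V : Type*} [DecidableEq V] {T : SimpleGraph V} {r y x : V}

lemma Qanc (hT : T.IsTree) (hyx : InSubtree T r y x) {u : V}
    (hu : u ∈ (upath hT y x).support) : InSubtree T r u x :=
  anc_step2 hT hyx hu

lemma Qanc2 (hT : T.IsTree) (hyx : InSubtree T r y x) {u : V}
    (hu : u ∈ (upath hT y x).support) : InSubtree T r y u :=
  anc_step hT hyx hu

lemma Qseg (hT : T.IsTree) (hyx : InSubtree T r y x) {u w : V}
    (hu : u ∈ (upath hT y x).support) (hw : w ∈ (upath hT y x).support)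
    (huw : InSubtree T r u w) :
    ∀ z ∈ (upath hT u w).support, z ∈ (upath hT y x).support := by
  intro z hz
  rcases (mem_split_iff hT hu).mp hw with hcase | hcase
  · -- w on the segment from y to u : then w = u
    have hwu : InSubtree T r w u := anc_step2 hT (Qanc2 hT hyx hu) hcase
    have : u = w := anc_antisymm hT huw hwu
    subst this
    rw [upath_self hT] at hz
    simp only [Walk.support_nil, List.mem_singleton] at hz
    subst hz; exact hu
  · -- w below u on the path to x
    have hsp : (upath hT u z).append (upath hT z x) = upath hT u x := by
      apply split hT
      have hsp2 : (upath hT u w).append (upath hT w x) = upath hT u x := split hT hcase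
      rw [← hsp2, Walk.mem_support_append_iff]
      exact Or.inl hz
    have hzux : z ∈ (upath hT u x).support := by
      rw [← hsp, Walk.mem_support_append_iff]
      exact Or.inl (Walk.end_mem_support _)
    exact (mem_split_iff hT hu).mpr (Or.inr hzux)

lemma Qwalk (hT : T.IsTree) (hyx : InSubtree T r y x) {u w : V}
    (hu : u ∈ (upath hT y x).support) (hw : w ∈ (upath hT y x).support) :
    ∀ z ∈ (upath hT u w).support, z ∈ (upath hT y x).support := by
  intro z hz
  rcases anc_total hT (Qanc hT hyx hu) (Qanc hT hyx hw) with hc | hc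
  · exact Qseg hT hyx hu hw hc z hz
  · exact Qseg hT hyx hw hu hc z ((upath_symm_mem hT).mp hz)

end QSeg

section Contraction

variable {V : Type*} {V1 : Type*} [DecidableEq V] {T : SimpleGraph V} {T1 : SimpleGraph V1}
  {ψ : V → V1} {y0 : V1} {r y x : V} {Q : T.Walk y x}

lemma proj (hadj : ∀ a b : V1, T1.Adj a b ↔ a ≠ b ∧ ∃ u v : V, T.Adj u v ∧ ψ u = a ∧ ψ v = b)
    {a b : V} (p : T.Walk a b) :
    ∃ p1 : T1.Walk (ψ a) (ψ b), ∀ c ∈ p1.support, ∃ z ∈ p.support, ψ z = c := by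
  induction p with
  | nil =>
    exact ⟨Walk.nil, by simp⟩
  | @cons a a1 b h q ih =>
    obtain ⟨q1, hq1⟩ := ih
    by_cases hc : ψ a = ψ a1
    · refine ⟨q1.copy hc.symm rfl, ?_⟩
      intro c hcmem
      rw [Walk.support_copy] at hcmem
      obtain ⟨z, hz, hze⟩ := hq1 c hcmem
      exact ⟨z, by rw [Walk.support_cons]; exact List.mem_cons_of_mem _ hz, hze⟩
    · refine ⟨Walk.cons ((hadj _ _).mpr ⟨hc, a, a1, h, rfl, rfl⟩) q1, ?_⟩
      intro c hcmem
      rw [Walk.support_cons] at hcmem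
      rcases List.mem_cons.mp hcmem with rfl | hcmem
      · exact ⟨a, Walk.start_mem_support _, rfl⟩
      · obtain ⟨z, hz, hze⟩ := hq1 c hcmem
        exact ⟨z, by rw [Walk.support_cons]; exact List.mem_cons_of_mem _ hz, hze⟩

lemma fiber (hT : T.IsTree) (hQ : Q.IsPath) (hyx : InSubtree T r y x)
    (hψQ : ∀ u ∈ Q.support, ψ u = y0)
    (hψn : ∀ u : V, u ∉ Q.support → ψ u ≠ y0)
    (hψinj : ∀ u v : V, u ∉ Q.support → v ∉ Q.support → ψ u = ψ v → u = v)
    {u w : V} (huv : ψ u = ψ w) :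
    ∃ p : T.Walk u w, ∀ z ∈ p.support, ψ z = ψ u := by
  classical
  have hQe : Q = upath hT y x := path_eq hT hQ
  by_cases hu : u ∈ Q.support <;> by_cases hw : w ∈ Q.support
  · refine ⟨upath hT u w, fun z hz => ?_⟩
    have hzQ : z ∈ Q.support := by
      rw [hQe]
      exact Qwalk hT hyx (hQe ▸ hu) (hQe ▸ hw) z hz
    rw [hψQ z hzQ, hψQ u hu]
  · exact absurd (huv ▸ hψQ u hu) (hψn w hw)
  · exact absurd (huv.symm ▸ hψQ w hw) (hψn u hu)
  · obtain rfl := hψinj u w hu hw huv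
    exact ⟨Walk.nil, by simp⟩

lemma lift (hT : T.IsTree) (hQ : Q.IsPath) (hyx : InSubtree T r y x)
    (hψQ : ∀ u ∈ Q.support, ψ u = y0)
    (hψn : ∀ u : V, u ∉ Q.support → ψ u ≠ y0)
    (hψinj : ∀ u v : V, u ∉ Q.support → v ∉ Q.support → ψ u = ψ v → u = v)
    (hadj : ∀ a b : V1, T1.Adj a b ↔ a ≠ b ∧ ∃ u v : V, T.Adj u v ∧ ψ u = a ∧ ψ v = b)
    {a b : V1} (p1 : T1.Walk a b) :
    ∀ u w : V, ψ u = a → ψ w = b →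
      ∃ p : T.Walk u w, ∀ z ∈ p.support, ψ z ∈ p1.support := by
  induction p1 with
  | nil =>
    intro u w hu hw
    obtain ⟨p, hp⟩ := fiber hT hQ hyx hψQ hψn hψinj (huv := hu.trans hw.symm)
    refine ⟨p, fun z hz => ?_⟩
    rw [Walk.support_nil, List.mem_singleton, hp z hz, hu]
  | @cons a c b h q ih =>
    intro u w hu hw
    obtain ⟨hne, u', w', hadj', hu', hw'⟩ := (hadj a c).mp h
    obtain ⟨p0, hp0⟩ := fiber hT hQ hyx hψQ hψn hψinj (huv := hu.trans hu'.symm)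
    obtain ⟨p2, hp2⟩ := ih w' w hw' hw
    refine ⟨p0.append (Walk.cons hadj' p2), fun z hz => ?_⟩
    rcases (Walk.mem_support_append_iff _ _).mp hz with hz | hz
    · rw [hp0 z hz, hu, Walk.support_cons]
      exact List.mem_cons_self
    · rw [Walk.support_cons] at hz
      rcases List.mem_cons.mp hz with rfl | hz
      · rw [hu', Walk.support_cons]; exact List.mem_cons_self
      · rw [Walk.support_cons]
        exact List.mem_cons_of_mem _ (hp2 z hz)

end Contraction

end MCkit
namespace MCkit

open SimpleGraph

variable {V : Type*} [DecidableEq V] {T : SimpleGraph V} {r y x v : V}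

lemma avoid_iff (hT : T.IsTree) {u x v : V} :
    (∀ p : T.Walk u x, p.IsPath → v ∉ p.support) ↔ v ∉ (upath hT u x).support := by
  constructor
  · intro h; exact h _ (upath_isPath hT u x)
  · intro h p hp; rw [path_eq hT hp]; exact h

lemma Tx_sub_D (hT : T.IsTree) (hyx : InSubtree T r y x)
    (hvQ : v ∈ (upath hT y x).support) {u : V} (hux : u ≠ x) (hxu : InSubtree T r x u) :
    u ∈ TdagSet T r v x := by
  have hvx : InSubtree T r v x := Qanc hT hyx hvQ
  refine ⟨?_, ?_, Or.inl hxu⟩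
  · rintro rfl
    exact hux (anc_antisymm hT hvx hxu)
  · rw [inSub_iff hT, ← split hT ((inSub_iff hT).mp hxu), Walk.mem_support_append_iff]
    exact Or.inl ((inSub_iff hT).mp hvx)

lemma D_sub_D' (hT : T.IsTree) (hyx : InSubtree T r y x)
    (hvQ : v ∈ (upath hT y x).support) {u : V} (hu : u ∈ TdagSet T r v x) :
    u ∈ TdagSet T r y x := by
  obtain ⟨huv, hvu, hthird⟩ := hu
  have hyv : InSubtree T r y v := Qanc2 hT hyx hvQ
  refine ⟨?_, ?_, ?_⟩
  · rintro rfl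
    exact huv (anc_antisymm hT hvu hyv).symm
  · rw [inSub_iff hT, ← split hT ((inSub_iff hT).mp hvu), Walk.mem_support_append_iff]
    exact Or.inl ((inSub_iff hT).mp hyv)
  · rcases hthird with hxu | havoid
    · exact Or.inl hxu
    · refine Or.inr ((avoid_iff hT).mpr ?_)
      intro hyux
      apply (avoid_iff hT).mp havoid
      rw [mem_split_iff hT hyux]
      exact Or.inr hvQ

lemma claimC (hT : T.IsTree) (hyx : InSubtree T r y x)
    (hvQ : v ∈ (upath hT y x).support) {z s : V} (hz : z ∈ TdagSet T r v x)
    (hs : s ∉ TdagSet T r v x) (hsv : s ≠ v) : v ∈ (upath hT s z).support := by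
  have hvx : InSubtree T r v x := Qanc hT hyx hvQ
  by_cases hsub : InSubtree T r v s
  · have hnt : ¬ (InSubtree T r x s ∨ ∀ p : T.Walk s x, p.IsPath → v ∉ p.support) :=
      fun hth => hs ⟨hsv, hsub, hth⟩
    push_neg at hnt
    obtain ⟨hnx, p, hp, hvp⟩ := hnt
    have hvsx : v ∈ (upath hT s x).support := path_eq hT hp ▸ hvp
    have hvnex : v ≠ x := by
      rintro rfl
      exact hs ⟨hsv, hsub, Or.inl hsub⟩
    have hC1 : v ∉ (upath hT z x).support := by
      obtain ⟨hzv, hvz, hzthird⟩ := hz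
      rcases hzthird with hxz | havoid
      · intro hvmem
        exact hvnex (disj_split hT ((inSub_iff hT).mp hxz) ((inSub_iff hT).mp hvx)
          ((upath_symm_mem hT).mp hvmem))
      · exact (avoid_iff hT).mp havoid
    have hvW := mem_sep hT hvsx ((upath hT s z).append (upath hT z x))
    rcases (Walk.mem_support_append_iff _ _).mp hvW with h | h
    · exact h
    · exact absurd h hC1
  · exact (upath_symm_mem hT).mpr (sep_subtree hT hz.2.1 hsub)

lemma yC1 (hT : T.IsTree) (hyx : InSubtree T r y x) (hynx : y ≠ x) {a : V}
    (ha : a ∈ TdagSet T r y x) : y ∉ (upath hT a x).support := by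
  obtain ⟨hay, hya, hthird⟩ := ha
  rcases hthird with hxa | havoid
  · intro hymem
    exact hynx (disj_split hT ((inSub_iff hT).mp hxa) ((inSub_iff hT).mp hyx)
      ((upath_symm_mem hT).mp hymem))
  · exact (avoid_iff hT).mp havoid

lemma D'_convex (hT : T.IsTree) (hyx : InSubtree T r y x) (hynx : y ≠ x) {s t z : V}
    (hs : s ∈ TdagSet T r y x) (ht : t ∈ TdagSet T r y x)
    (hz : z ∈ (upath hT s t).support) : z ∈ TdagSet T r y x := by
  have hyst : y ∉ (upath hT s t).support := by
    intro hmem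
    have hW := mem_sep hT hmem ((upath hT s x).append (upath hT x t))
    rcases (Walk.mem_support_append_iff _ _).mp hW with h | h
    · exact yC1 hT hyx hynx hs h
    · exact yC1 hT hyx hynx ht ((upath_symm_mem hT).mp h)
  refine ⟨fun he => hyst (he ▸ hz), subtree_convex hT hs.2.1 ht.2.1 hz, ?_⟩
  refine Or.inr ((avoid_iff hT).mpr ?_)
  intro hyzx
  have hysz : y ∉ (upath hT s z).support := by
    intro hmem
    exact hyst ((mem_split_iff hT hz).mpr (Or.inl hmem))
  have hW := mem_sep hT hyzx ((upath hT s z).reverse.append (upath hT s x))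
  rcases (Walk.mem_support_append_iff _ _).mp hW with h | h
  · rw [Walk.support_reverse, List.mem_reverse] at h
    exact hysz h
  · exact yC1 hT hyx hynx hs h

end MCkit
namespace MCkit

open SimpleGraph

variable {V : Type*} [Fintype V] [DecidableEq V] {T : SimpleGraph V} {r y x : V}

lemma X_inter_D' (hT : T.IsTree) {X : Set V} (hXcl : LCAClosed T r X)
    (hx : x ∈ X) (hxfar : ∀ x' ∈ X, T.dist r x' ≤ T.dist r x)
    (hy : y ∈ X) (hynx : y ≠ x) (hyx : InSubtree T r y x)
    (hyclosest : ∀ y' ∈ X, y' ≠ x → InSubtree T r y' x → T.dist r y' ≤ T.dist r y)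
    {x'' : V} (hx'' : x'' ∈ X) (hD' : x'' ∈ TdagSet T r y x) : x'' = x := by
  by_contra hne
  obtain ⟨z, hlca⟩ := exists_isLCA hT r x x''
  have hzX : z ∈ X := hXcl x hx x'' hx'' z hlca
  have hzx : InSubtree T r z x := hlca.1
  have hzx'' : InSubtree T r z x'' := hlca.2.1
  have hyx'' : InSubtree T r y x'' := hD'.2.1
  have hyz : T.dist r y ≤ T.dist r z := hlca.2.2 y hyx hyx''
  have hnotTx : ¬ InSubtree T r x x'' := by
    intro hxx
    have hlt := anc_dist_lt hT ((inSub_iff hT).mp hxx) (Ne.symm hne)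
    have := hxfar x'' hx''
    omega
  by_cases hzy : z = y
  · subst hzy
    have hmed : z ∈ (upath hT x x'').support := median hT hlca
    rcases hD'.2.2 with hxx | havoid
    · exact hnotTx hxx
    · exact (avoid_iff hT).mp havoid ((upath_symm_mem hT).mp hmed)
  · have hzy' : InSubtree T r y z := by
      rcases anc_total hT hzx hyx with hc | hc
      · exfalso
        have := anc_dist_lt hT ((inSub_iff hT).mp hc) hzy
        omega
      · exact hc
    have hzgty : T.dist r y < T.dist r z :=
      anc_dist_lt hT ((inSub_iff hT).mp hzy') (fun hh => hzy hh.symm)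
    by_cases hzex : z = x
    · subst hzex
      exact hnotTx hzx''
    · have := hyclosest z hzX hzex hzx
      omega

end MCkit

open MCkit


/-- Correctness of the branching step of the FPT-algorithm for
Weighted Multicut on Trees parameterized by the solution size
(Lemma 1 of the paper):  the original instance has a `P`-multicut of size `≤ k`
and weight `≤ w` iff the contracted instance `I₁` has one, or some instance
`I_{2,i}` (with modified weights) has a multicut of size `≤ k - i` and weight `≤ w`. -/
theorem stmt_8 {V V1 : Type*} [Fintype V] [DecidableEq V] [Fintype V1] [DecidableEq V1]
    (T : SimpleGraph V) (hT : T.IsTree) (r : V)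
    (P : Set (V × V)) (wt : V → ℕ) (w k : ℕ)
    -- `X` : a `P`-multicut closed under lca, of size at least 2
    (X : Set V) (hXmc : IsMulticut T P X) (hXcl : LCAClosed T r X) (hX2 : 2 ≤ X.ncard)
    -- `x ∈ X` furthest from the root
    (x : V) (hx : x ∈ X) (hxfar : ∀ x' ∈ X, T.dist r x' ≤ T.dist r x)
    -- `y ∈ X` the closest strict ancestor of `x` in `X`
    (y : V) (hy : y ∈ X) (hyanc : y ≠ x ∧ InSubtree T r y x)
    (hyclosest : ∀ y' ∈ X, y' ≠ x → InSubtree T r y' x → T.dist r y' ≤ T.dist r y)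
    -- the path `P_{y,x}`
    (Q : T.Walk y x) (hQ : Q.IsPath)
    -- the instance `I₁`, obtained by contracting `P_{y,x}` onto `y0`
    (T1 : SimpleGraph V1) (hT1 : T1.IsTree) (ψ : V → V1) (y0 : V1)
    (hψQ : ∀ u ∈ Q.support, ψ u = y0)
    (hψn : ∀ u : V, u ∉ Q.support → ψ u ≠ y0)
    (hψinj : ∀ u v : V, u ∉ Q.support → v ∉ Q.support → ψ u = ψ v → u = v)
    (hψsurj : Function.Surjective ψ)
    (hadj : ∀ a b : V1, T1.Adj a b ↔ a ≠ b ∧ ∃ u v : V, T.Adj u v ∧ ψ u = a ∧ ψ v = b)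
    (wt1 : V1 → ℕ) (hwt1y : wt1 y0 = w + 1)
    (hwt1 : ∀ u : V, u ∉ Q.support → wt1 (ψ u) = wt u)
    -- the instances `I_{2,i}` on `T₂ = T - T^†_x`
    (A2 : Set V) (hA2 : A2 = {u : V | ¬ (u ≠ x ∧ InSubtree T r x u)})
    (P2 : Set (V × V))
    (hP2 : P2 = ((P ∩ A2 ×ˢ A2) \ (TdagSet T r y x ×ˢ TdagSet T r y x)) ∪ {(y, x)})
    -- `m i v` : minimum weight of a `P|_{T^†_{v,x}}`-multicut of size at most `i`
    (m : ℕ → V → ℕ∞)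
    (hm : ∀ (i : ℕ) (v : V), m i v = sInf {ww : ℕ∞ | ∃ S : Finset V,
      (↑S : Set V) ⊆ TdagSet T r v x ∧ S.card ≤ i ∧
      IsMulticutOn T (TdagSet T r v x) P ↑S ∧ ww = ∑ c ∈ S, (wt c : ℕ∞)})
    (wt2 : ℕ → V → ℕ∞)
    (hwt2a : ∀ (i : ℕ) (v : V), v ∈ Q.support → wt2 i v = (wt v : ℕ∞) + m i v)
    (hwt2b : ∀ (i : ℕ) (v : V), v ∉ Q.support → wt2 i v = (wt v : ℕ∞)) :
    (∃ S : Finset V, S.card ≤ k ∧ ∑ c ∈ S, wt c ≤ w ∧ IsMulticut T P ↑S) ↔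
    ((∃ S1 : Finset V1, S1.card ≤ k ∧ ∑ c ∈ S1, wt1 c ≤ w ∧
        IsMulticut T1 {q : V1 × V1 | ∃ s t : V, (s, t) ∈ P ∧ q = (ψ s, ψ t)} ↑S1) ∨
      (∃ i ≤ k, ∃ S2 : Finset V, (↑S2 : Set V) ⊆ A2 ∧ S2.card ≤ k - i ∧
        (∑ c ∈ S2, wt2 i c) ≤ (w : ℕ∞) ∧ IsMulticutOn T A2 P2 ↑S2)) := by
  
  classical
  subst hA2 hP2
  obtain ⟨hynx, hyx⟩ := hyanc
  have hQe : Q = upath hT y x := path_eq hT hQ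
  -- every vertex not in `T^†_{v,x}` (for `v` on `Q`) that is in `T^†_x` would be in it
  have hnotD_A2 : ∀ v ∈ (upath hT y x).support, ∀ u : V, u ∉ TdagSet T r v x →
      u ∈ {u : V | ¬ (u ≠ x ∧ InSubtree T r x u)} := by
    intro v hvQ u hu
    simp only [Set.mem_setOf_eq]
    intro ⟨hux, hxu⟩
    exact hu (Tx_sub_D hT hyx hvQ hux hxu)
  have hxA2 : x ∈ {u : V | ¬ (u ≠ x ∧ InSubtree T r x u)} := by
    simp only [Set.mem_setOf_eq]
    rintro ⟨h1, _⟩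
    exact h1 rfl
  have hQA2 : ∀ u ∈ Q.support, u ∈ {u : V | ¬ (u ≠ x ∧ InSubtree T r x u)} := by
    intro u hu
    simp only [Set.mem_setOf_eq]
    rintro ⟨hux, hxu⟩
    exact hux (anc_antisymm hT hxu (Qanc hT hyx (hQe ▸ hu))).symm
  constructor
  · rintro ⟨S, hSk, hSw, hSmc⟩
    by_cases hSQ : ∀ u ∈ S, u ∉ Q.support
    · -- Case A : solution avoids the contracted path, use `I₁`
      left
      refine ⟨S.image ψ, le_trans Finset.card_image_le hSk, ?_, ?_⟩
      · rw [Finset.sum_image (fun u hu v hv h => hψinj u v (hSQ u hu) (hSQ v hv) h)]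
        calc ∑ u ∈ S, wt1 (ψ u) = ∑ u ∈ S, wt u :=
              Finset.sum_congr rfl (fun u hu => hwt1 u (hSQ u hu))
          _ ≤ w := hSw
      · rintro a b ⟨s, t, hst, heq⟩ p1 hp1
        injection heq with h1 h2
        subst h1 h2
        obtain ⟨p, hp⟩ := lift hT hQ hyx hψQ hψn hψinj hadj p1 s t rfl rfl
        obtain ⟨z, hzS, hzsup⟩ := hSmc s t hst p.bypass p.bypass_isPath
        exact ⟨ψ z, Finset.mem_coe.mpr (Finset.mem_image_of_mem ψ (Finset.mem_coe.mp hzS)),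
          hp z (p.support_bypass_subset hzsup)⟩
    · -- Case B : solution meets the contracted path, use `I_{2,i}`
      right
      push_neg at hSQ
      obtain ⟨u0, hu0S, hu0Q⟩ := hSQ
      have hSQne : (S.filter (fun u => u ∈ Q.support)).Nonempty :=
        ⟨u0, Finset.mem_filter.mpr ⟨hu0S, hu0Q⟩⟩
      obtain ⟨v, hvSQ, hvmin⟩ :=
        (S.filter (fun u => u ∈ Q.support)).exists_min_image (fun u => T.dist r u) hSQne
      obtain ⟨hvS, hvQ⟩ := Finset.mem_filter.mp hvSQ
      have hvQ' : v ∈ (upath hT y x).support := hQe ▸ hvQ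
      set D : Set V := TdagSet T r v x with hD
      set Sin : Finset V := S.filter (fun u => u ∈ D) with hSin
      set i : ℕ := Sin.card with hi
      have hvnD : v ∉ D := fun h => h.1 rfl
      have hothers : ∀ c ∈ S, c ∈ Q.support → c ≠ v → c ∈ D := by
        intro c hcS hcQ hcne
        have hcQ' : c ∈ (upath hT y x).support := hQe ▸ hcQ
        rcases anc_total hT (Qanc hT hyx hvQ') (Qanc hT hyx hcQ') with hvc | hcv
        · refine ⟨hcne, hvc, Or.inr ((avoid_iff hT).mpr ?_)⟩
          intro hvmem
          exact hcne (disj_split hT ((inSub_iff hT).mp (Qanc hT hyx hcQ'))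
            ((inSub_iff hT).mp hvc) hvmem).symm
        · exfalso
          have hlt := anc_dist_lt hT ((inSub_iff hT).mp hcv) hcne
          have := hvmin c (Finset.mem_filter.mpr ⟨hcS, hcQ⟩)
          omega
      have hSinD : (↑Sin : Set V) ⊆ D := by
        intro u hu
        exact (Finset.mem_filter.mp (Finset.mem_coe.mp hu)).2
      have hSinMC : IsMulticutOn T D P ↑Sin := by
        intro s t hst hsD htD p hp hpD
        obtain ⟨z, hzS, hzsup⟩ := hSmc s t hst p hp
        exact ⟨z, Finset.mem_coe.mpr (Finset.mem_filter.mpr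
          ⟨Finset.mem_coe.mp hzS, hpD z hzsup⟩), hzsup⟩
      have hm_le : m i v ≤ ∑ c ∈ Sin, (wt c : ℕ∞) := by
        rw [hm]
        exact sInf_le ⟨Sin, hSinD, le_refl _, hSinMC, rfl⟩
      set S2 : Finset V := S \ Sin with hS2
      have hvS2 : v ∈ S2 := Finset.mem_sdiff.mpr
        ⟨hvS, fun h => hvnD ((Finset.mem_filter.mp h).2)⟩
      refine ⟨i, le_trans (hi ▸ Finset.card_filter_le S _) hSk, S2, ?_, ?_, ?_, ?_⟩
      · intro u hu
        by_contra huA2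
        have huD : u ∈ D := by
          apply Tx_sub_D hT hyx hvQ'
          · intro hux
            exact huA2 (by simp [Set.mem_setOf_eq, hux])
          · by_contra hxu
            exact huA2 (fun hh => hxu hh.2)
        obtain ⟨huS, hunSin⟩ := Finset.mem_sdiff.mp (Finset.mem_coe.mp hu)
        exact hunSin (Finset.mem_filter.mpr ⟨huS, huD⟩)
      · rw [hS2, Finset.card_sdiff_of_subset (Finset.filter_subset _ _)]
        exact Nat.sub_le_sub_right hSk i
      · -- weight bound
        have herase : ∀ c ∈ S2.erase v, wt2 i c = (wt c : ℕ∞) := by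
          intro c hc
          obtain ⟨hcv, hcS2⟩ := Finset.mem_erase.mp hc
          refine hwt2b i c ?_
          intro hcQ
          obtain ⟨hcS, hcn⟩ := Finset.mem_sdiff.mp hcS2
          exact hcn (Finset.mem_filter.mpr ⟨hcS, hothers c hcS hcQ hcv⟩)
        have h1 : ∑ c ∈ S2, wt2 i c = (wt v : ℕ∞) + m i v + ∑ c ∈ S2.erase v, (wt c : ℕ∞) := by
          rw [← Finset.add_sum_erase _ _ hvS2, hwt2a i v hvQ]
          congr 1
          exact Finset.sum_congr rfl herase
        have h2 : ∑ c ∈ S2, (wt c : ℕ∞) = (wt v : ℕ∞) + ∑ c ∈ S2.erase v, (wt c : ℕ∞) :=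
          (Finset.add_sum_erase _ _ hvS2).symm
        have h3 : ∑ c ∈ S2, wt2 i c ≤ ∑ c ∈ Sin, (wt c : ℕ∞) + ∑ c ∈ S2, (wt c : ℕ∞) := by
          rw [h1, h2]
          calc (wt v : ℕ∞) + m i v + ∑ c ∈ S2.erase v, (wt c : ℕ∞)
              ≤ (wt v : ℕ∞) + (∑ c ∈ Sin, (wt c : ℕ∞)) + ∑ c ∈ S2.erase v, (wt c : ℕ∞) := by
                gcongr
            _ = ∑ c ∈ Sin, (wt c : ℕ∞) + ((wt v : ℕ∞) + ∑ c ∈ S2.erase v, (wt c : ℕ∞)) := by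
                ring
        have h4 : ∑ c ∈ Sin, (wt c : ℕ∞) + ∑ c ∈ S2, (wt c : ℕ∞) = ∑ c ∈ S, (wt c : ℕ∞) := by
          rw [add_comm, hS2]
          rw [← Finset.sum_sdiff (Finset.filter_subset (fun u => u ∈ D) S)]
        have h5 : (∑ c ∈ S, (wt c : ℕ∞)) ≤ (w : ℕ∞) := by
          rw [← Nat.cast_sum]
          exact_mod_cast hSw
        exact le_trans h3 (h4 ▸ h5)
      · -- multicut property for `I_{2,i}`
        intro s t hst hsA2 htA2 p hp hpA2
        obtain rfl : p = upath hT s t := path_eq hT hp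
        rcases hst with ⟨⟨hstP, _⟩, hstD'⟩ | hyx2
        · obtain ⟨z, hzS, hzsup⟩ := hSmc s t hstP _ (upath_isPath hT s t)
          by_cases hzS2 : z ∈ S2
          · exact ⟨z, Finset.mem_coe.mpr hzS2, hzsup⟩
          · have hzSin : z ∈ Sin := by
              rcases Finset.mem_sdiff.not.mp hzS2 with h
              push_neg at h
              exact h (Finset.mem_coe.mp hzS)
            have hzD : z ∈ D := (Finset.mem_filter.mp hzSin).2
            have hstD'' : ¬(s ∈ TdagSet T r y x ∧ t ∈ TdagSet T r y x) := by
              intro hh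
              exact hstD' (Set.mem_prod.mpr hh)
            have hvp : v ∈ (upath hT s t).support := by
              rcases not_and_or.mp hstD'' with hsD' | htD'
              · have hsD : s ∉ D := fun hh => hsD' (D_sub_D' hT hyx hvQ' hh)
                by_cases hsv : s = v
                · exact hsv ▸ Walk.start_mem_support _
                · exact (mem_split_iff hT hzsup).mpr
                    (Or.inl (claimC hT hyx hvQ' hzD hsD hsv))
              · have htD : t ∉ D := fun hh => htD' (D_sub_D' hT hyx hvQ' hh)
                by_cases htv : t = v
                · exact htv ▸ Walk.end_mem_support _
                · exact (mem_split_iff hT hzsup).mpr (Or.inr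
                    ((upath_symm_mem hT).mpr (claimC hT hyx hvQ' hzD htD htv)))
            exact ⟨v, Finset.mem_coe.mpr hvS2, hvp⟩
        · obtain ⟨rfl, rfl⟩ : s = y ∧ t = x := by
            have := Set.mem_singleton_iff.mp hyx2
            exact ⟨congrArg Prod.fst this, congrArg Prod.snd this⟩
          exact ⟨v, Finset.mem_coe.mpr hvS2, hvQ'⟩
  · rintro (⟨S1, hS1k, hS1w, hS1mc⟩ | ⟨i, hik, S2, hS2A2, hS2k, hS2w, hS2mc⟩)
    · -- from a solution of `I₁`
      have hy0 : y0 ∉ S1 := by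
        intro h
        have := Finset.single_le_sum (f := wt1) (fun c _ => Nat.zero_le _) h
        omega
      set S : Finset V := Finset.univ.filter (fun u => ψ u ∈ S1) with hS
      have hSn : ∀ u ∈ S, u ∉ Q.support := by
        intro u hu huQ
        have hψu : ψ u ∈ S1 := (Finset.mem_filter.mp hu).2
        exact hy0 (hψQ u huQ ▸ hψu)
      refine ⟨S, ?_, ?_, ?_⟩
      · refine le_trans (Finset.card_le_card_of_injOn ψ ?_ ?_) hS1k
        · intro u hu; exact (Finset.mem_filter.mp hu).2
        · intro u hu u' hu' h
          exact hψinj u u' (hSn u (Finset.mem_coe.mp hu)) (hSn u' (Finset.mem_coe.mp hu')) h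
      · have e1 : ∑ u ∈ S, wt u = ∑ u ∈ S, wt1 (ψ u) :=
          Finset.sum_congr rfl (fun u hu => (hwt1 u (hSn u hu)).symm)
        have e2 : ∑ u ∈ S, wt1 (ψ u) = ∑ c ∈ S.image ψ, wt1 c :=
          (Finset.sum_image (fun u hu u' hu' h =>
            hψinj u u' (hSn u hu) (hSn u' hu') h)).symm
        have e3 : ∑ c ∈ S.image ψ, wt1 c ≤ ∑ c ∈ S1, wt1 c := by
          apply Finset.sum_le_sum_of_subset
          intro c hc
          obtain ⟨u, hu, rfl⟩ := Finset.mem_image.mp hc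
          exact (Finset.mem_filter.mp hu).2
        omega
      · intro s t hst p hp
        obtain ⟨p1, hp1⟩ := proj hadj p
        obtain ⟨c, hcS1, hcsup⟩ := hS1mc (ψ s) (ψ t) ⟨s, t, hst, rfl⟩
          p1.bypass p1.bypass_isPath
        obtain ⟨z, hzp, hze⟩ := hp1 c (p1.support_bypass_subset hcsup)
        refine ⟨z, Finset.mem_coe.mpr (Finset.mem_filter.mpr ⟨Finset.mem_univ _, ?_⟩), hzp⟩
        rw [hze]
        exact Finset.mem_coe.mp hcS1
    · -- from a solution of `I_{2,i}`
      obtain ⟨v, hvS2', hvQ⟩ := hS2mc y x (Or.inr rfl) (hQA2 y Q.start_mem_support) hxA2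
        Q hQ hQA2
      have hvS2 : v ∈ S2 := Finset.mem_coe.mp hvS2'
      have hvQ' : v ∈ (upath hT y x).support := by
        rw [hQe] at hvQ; exact hvQ
      have hle1 : wt2 i v ≤ ∑ c ∈ S2, wt2 i c :=
        Finset.single_le_sum (f := wt2 i) (fun c _ => zero_le) hvS2
      have hwv : wt2 i v = (wt v : ℕ∞) + m i v := hwt2a i v hvQ
      have hmiv_ne : m i v ≠ ⊤ := by
        intro h
        rw [hwv, h, add_top] at hle1
        have : (⊤ : ℕ∞) ≤ (w : ℕ∞) := le_trans hle1 hS2w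
        exact (ENat.coe_ne_top w) (top_le_iff.mp this)
      have hset_ne : {ww : ℕ∞ | ∃ Sm : Finset V,
          (↑Sm : Set V) ⊆ TdagSet T r v x ∧ Sm.card ≤ i ∧
          IsMulticutOn T (TdagSet T r v x) P ↑Sm ∧ ww = ∑ c ∈ Sm, (wt c : ℕ∞)}.Nonempty := by
        by_contra hemp
        rw [Set.not_nonempty_iff_eq_empty] at hemp
        rw [hm, hemp, sInf_empty] at hmiv_ne
        exact hmiv_ne rfl
      have hmem := csInf_mem hset_ne
      rw [← hm i v] at hmem
      obtain ⟨Sm, hSmD, hSmcard, hSmmc, hSmsum⟩ := hmem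
      refine ⟨S2 ∪ Sm, ?_, ?_, ?_⟩
      · calc (S2 ∪ Sm).card ≤ S2.card + Sm.card := Finset.card_union_le _ _
          _ ≤ (k - i) + i := Nat.add_le_add hS2k hSmcard
          _ ≤ k := by omega
      · -- weight bound
        have key : (∑ c ∈ S2, (wt c : ℕ∞)) + m i v ≤ ∑ c ∈ S2, wt2 i c := by
          rw [← Finset.add_sum_erase _ (fun c => (wt c : ℕ∞)) hvS2,
            ← Finset.add_sum_erase _ (wt2 i) hvS2, hwv]
          have hterm : ∑ c ∈ S2.erase v, (wt c : ℕ∞) ≤ ∑ c ∈ S2.erase v, wt2 i c := by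
            apply Finset.sum_le_sum
            intro c _
            by_cases hcQ : c ∈ Q.support
            · rw [hwt2a i c hcQ]; exact le_self_add
            · rw [hwt2b i c hcQ]
          calc (wt v : ℕ∞) + ∑ c ∈ S2.erase v, (wt c : ℕ∞) + m i v
              = (wt v : ℕ∞) + m i v + ∑ c ∈ S2.erase v, (wt c : ℕ∞) := by ring
            _ ≤ (wt v : ℕ∞) + m i v + ∑ c ∈ S2.erase v, wt2 i c := by gcongr
        have hsum_union : ∑ c ∈ S2 ∪ Sm, (wt c : ℕ∞) ≤
            (∑ c ∈ S2, (wt c : ℕ∞)) + ∑ c ∈ Sm, (wt c : ℕ∞) := by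
          rw [← Finset.union_sdiff_self_eq_union, Finset.sum_union Finset.disjoint_sdiff]
          have hsub : ∑ c ∈ Sm \ S2, (wt c : ℕ∞) ≤ ∑ c ∈ Sm, (wt c : ℕ∞) :=
            Finset.sum_le_sum_of_subset Finset.sdiff_subset
          exact add_le_add le_rfl hsub
        have hfinal : ∑ c ∈ S2 ∪ Sm, (wt c : ℕ∞) ≤ (w : ℕ∞) := by
          refine le_trans hsum_union ?_
          rw [← hSmsum]
          exact le_trans key hS2w
        have hcast : ((∑ c ∈ S2 ∪ Sm, wt c : ℕ) : ℕ∞) = ∑ c ∈ S2 ∪ Sm, (wt c : ℕ∞) :=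
          Nat.cast_sum _ _
        rw [← hcast] at hfinal
        exact_mod_cast hfinal
      · -- the union is a multicut
        intro s t hst p hp
        obtain rfl : p = upath hT s t := path_eq hT hp
        by_cases hcase1 : s ∈ TdagSet T r v x ∧ t ∈ TdagSet T r v x ∧
            ∀ z ∈ (upath hT s t).support, z ∈ TdagSet T r v x
        · obtain ⟨z, hz, hzs⟩ := hSmmc s t hst hcase1.1 hcase1.2.1 _
            (upath_isPath hT s t) hcase1.2.2
          exact ⟨z, Finset.mem_coe.mpr (Finset.mem_union_right _ (Finset.mem_coe.mp hz)), hzs⟩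
        · by_cases hvp : v ∈ (upath hT s t).support
          · exact ⟨v, Finset.mem_coe.mpr (Finset.mem_union_left _ hvS2), hvp⟩
          · have hpD : ∀ z ∈ (upath hT s t).support, z ∉ TdagSet T r v x := by
              intro z hz hzD
              have hall : ∀ z' ∈ (upath hT s t).support, z' ∈ TdagSet T r v x := by
                intro z' hz'
                by_contra hz'D
                have hz'v : z' ≠ v := fun h => hvp (h ▸ hz')
                exact hvp (mem_sub_path hT hz' hz v (claimC hT hyx hvQ' hzD hz'D hz'v))
              exact hcase1 ⟨hall s (Walk.start_mem_support _),
                hall t (Walk.end_mem_support _), hall⟩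
            have hA2mem : ∀ z ∈ (upath hT s t).support,
                z ∈ {u : V | ¬ (u ≠ x ∧ InSubtree T r x u)} :=
              fun z hz => hnotD_A2 v hvQ' z (hpD z hz)
            have hstD' : ¬(s ∈ TdagSet T r y x ∧ t ∈ TdagSet T r y x) := by
              rintro ⟨hsD', htD'⟩
              obtain ⟨ξ, hξX, hξsup⟩ := hXmc s t hst _ (upath_isPath hT s t)
              have hξD' : ξ ∈ TdagSet T r y x := D'_convex hT hyx hynx hsD' htD' hξsup
              have hξx : ξ = x := X_inter_D' hT hXcl hx hxfar hy hynx hyx hyclosest hξX hξD'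
              have hxsup : x ∈ (upath hT s t).support := hξx ▸ hξsup
              by_cases hvx' : v = x
              · exact hvp (hvx' ▸ hxsup)
              · exact hpD _ hxsup ⟨fun h => hvx' h.symm, Qanc hT hyx hvQ',
                  Or.inl (inSub_self hT r x)⟩
            obtain ⟨z, hz, hzs⟩ := hS2mc s t
              (Or.inl ⟨⟨hst, Set.mem_prod.mpr ⟨hA2mem s (Walk.start_mem_support _),
                hA2mem t (Walk.end_mem_support _)⟩⟩,
                fun hh => hstD' (Set.mem_prod.mp hh)⟩)
              (hA2mem s (Walk.start_mem_support _)) (hA2mem t (Walk.end_mem_support _))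
              _ (upath_isPath hT s t) hA2mem
            exact ⟨z, Finset.mem_coe.mpr (Finset.mem_union_left _ (Finset.mem_coe.mp hz)), hzs⟩
end

section
/- Let T be a path with vertices v_1, \dots, v_n in order, let P \subseteq V(T) \times V(T) be terminal pairs and wt : V(T) \to \mathbb{N}. For i \in \{0,1,\dots,n\} let T_i = T[\{v_1,\dots,v_i\}] and let B(i) be the minimum wt-weight of a P|_{T_i}-multicut in T_i, with B(i) = 0 whenever P|_{T_i} = \emptyset. Then B(1) = wt(v_1) if P|_{T_1} \ne \emptyset, and for every i > 1 with P|_{T_i} \ne \emptyset, letting i^* \le i be the largest index such that some terminal pair path of P is contained in T[\{v_{i^*}, \dots, v_i\}], it holds that B(i) = \min_{i^* \le j \le i} ( wt(v_j) + B(j-1) ). -/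
open SimpleGraph

/-- Intermediate value: any walk in the path graph visits every index between
its endpoints. -/
lemma pg_mem_support_of_between {n : ℕ} :
    ∀ {s t : Fin n} (p : (SimpleGraph.pathGraph n).Walk s t) (k : Fin n),
      min (s : ℕ) (t : ℕ) ≤ (k : ℕ) → (k : ℕ) ≤ max (s : ℕ) (t : ℕ) →
      k ∈ p.support := by
  intro s t p
  induction p with
  | nil =>
    intro k h1 h2
    simp only [SimpleGraph.Walk.support_nil, List.mem_singleton]
    exact Fin.ext (by omega)
  | @cons a b c h q ih =>
    intro k h1 h2
    by_cases hk : k = a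
    · simp [hk]
    · have hadj : (a : ℕ) + 1 = (b : ℕ) ∨ (b : ℕ) + 1 = (a : ℕ) :=
        SimpleGraph.pathGraph_adj.mp h
      have hka : (k : ℕ) ≠ (a : ℕ) := fun hh => hk (Fin.ext hh)
      rw [SimpleGraph.Walk.support_cons]
      exact List.mem_cons_of_mem _ (ih k (by omega) (by omega))

/-- The support of a path in the path graph stays between its endpoints. -/
lemma pg_support_between {n : ℕ} :
    ∀ {s t : Fin n} (p : (SimpleGraph.pathGraph n).Walk s t), p.IsPath →
      ∀ u ∈ p.support, min (s : ℕ) (t : ℕ) ≤ (u : ℕ) ∧ (u : ℕ) ≤ max (s : ℕ) (t : ℕ) := by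
  intro s t p
  induction p with
  | nil =>
    intro _ u hu
    rw [SimpleGraph.Walk.support_nil, List.mem_singleton] at hu
    subst hu; omega
  | @cons a b c h q ih =>
    intro hp u hu
    rw [SimpleGraph.Walk.cons_isPath_iff] at hp
    have hadj : (a : ℕ) + 1 = (b : ℕ) ∨ (b : ℕ) + 1 = (a : ℕ) :=
      SimpleGraph.pathGraph_adj.mp h
    rw [SimpleGraph.Walk.support_cons, List.mem_cons] at hu
    rcases hu with rfl | hu
    · omega
    · have hb := ih hp.1 u hu
      have hnot : ¬ (min (b : ℕ) (c : ℕ) ≤ (a : ℕ) ∧ (a : ℕ) ≤ max (b : ℕ) (c : ℕ)) := by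
        rintro ⟨h1, h2⟩
        exact hp.2 (pg_mem_support_of_between q a h1 h2)
      omega

/-- Existence of a monotone path between two ordered vertices of the path graph. -/
lemma pg_exists_monotone_path {n : ℕ} :
    ∀ (d : ℕ) (s t : Fin n), (t : ℕ) = (s : ℕ) + d →
      ∃ p : (SimpleGraph.pathGraph n).Walk s t, p.IsPath ∧
        ∀ u ∈ p.support, (s : ℕ) ≤ (u : ℕ) ∧ (u : ℕ) ≤ (t : ℕ) := by
  intro d
  induction d with
  | zero =>
    intro s t hst
    have : s = t := Fin.ext (by omega)
    subst this
    refine ⟨SimpleGraph.Walk.nil, SimpleGraph.Walk.IsPath.nil, ?_⟩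
    intro u hu
    rw [SimpleGraph.Walk.support_nil, List.mem_singleton] at hu
    subst hu; omega
  | succ d ih =>
    intro s t hst
    have hb : (s : ℕ) + 1 < n := by have := t.isLt; omega
    set b : Fin n := ⟨(s : ℕ) + 1, hb⟩ with hbdef
    have hadj : (SimpleGraph.pathGraph n).Adj s b :=
      SimpleGraph.pathGraph_adj.mpr (Or.inl rfl)
    obtain ⟨q, hq, hqb⟩ := ih b t (by simp [hbdef]; omega)
    refine ⟨SimpleGraph.Walk.cons hadj q, ?_, ?_⟩
    · rw [SimpleGraph.Walk.cons_isPath_iff]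
      refine ⟨hq, fun hs => ?_⟩
      have := (hqb s hs).1
      simp [hbdef] at this
    · intro u hu
      rw [SimpleGraph.Walk.support_cons, List.mem_cons] at hu
      rcases hu with rfl | hu
      · omega
      · have := hqb u hu
        simp [hbdef] at this
        omega

/-- Existence of a path between any two vertices of the path graph whose support
stays between the endpoints. -/
lemma pg_exists_path {n : ℕ} (s t : Fin n) :
    ∃ p : (SimpleGraph.pathGraph n).Walk s t, p.IsPath ∧
      ∀ u ∈ p.support, min (s : ℕ) (t : ℕ) ≤ (u : ℕ) ∧ (u : ℕ) ≤ max (s : ℕ) (t : ℕ) := by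
  rcases le_total (s : ℕ) (t : ℕ) with h | h
  · obtain ⟨p, hp, hbd⟩ := pg_exists_monotone_path ((t : ℕ) - (s : ℕ)) s t (by omega)
    exact ⟨p, hp, fun u hu => by have := hbd u hu; omega⟩
  · obtain ⟨p, hp, hbd⟩ := pg_exists_monotone_path ((s : ℕ) - (t : ℕ)) t s (by omega)
    refine ⟨p.reverse, hp.reverse, fun u hu => ?_⟩
    rw [SimpleGraph.Walk.support_reverse, List.mem_reverse] at hu
    have := hbd u hu; omega

/-- A finite set is a multicut on the prefix `{j | j < i}` of the path graph iff
it hits the interval spanned by every terminal pair inside the prefix. -/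
lemma pg_multicut_iff {n i : ℕ} (P : Set (Fin n × Fin n)) (S : Finset (Fin n)) :
    IsMulticutOn (SimpleGraph.pathGraph n) {j : Fin n | (j : ℕ) < i} P ↑S ↔
    ∀ s t : Fin n, (s, t) ∈ P → (s : ℕ) < i → (t : ℕ) < i →
      ∃ v ∈ S, min (s : ℕ) (t : ℕ) ≤ (v : ℕ) ∧ (v : ℕ) ≤ max (s : ℕ) (t : ℕ) := by
  constructor
  · intro hm s t hP hs ht
    obtain ⟨p, hp, hbd⟩ := pg_exists_path s t
    obtain ⟨v, hvS, hvp⟩ := hm s t hP hs ht p hp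
      (fun u hu => by have := hbd u hu; simp only [Set.mem_setOf_eq]; omega)
    exact ⟨v, hvS, hbd v hvp⟩
  · intro hit s t hP hs ht p hp _
    obtain ⟨v, hvS, h1, h2⟩ := hit s t hP hs ht
    exact ⟨v, hvS, pg_mem_support_of_between p v h1 h2⟩

/-- The dynamic program on paths: on a path `v_1, …, v_n` (vertices `Fin n`,
1-based index of `j : Fin n` being `j+1`), `B i` is the minimum weight of a
`P|_{T_i}`-multicut in the prefix `T_i` on the first `i` vertices.  Then
`B 1 = wt v₁` whenever `P|_{T_1} ≠ ∅`, and for `i > 1` with `P|_{T_i} ≠ ∅`,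
letting `i*` be the largest index such that some terminal pair path is
contained in the segment `{v_{i*}, …, v_i}`, we have
`B i = min_{i* ≤ j ≤ i} (wt v_j + B (j-1))`. -/
theorem stmt_9 (n : ℕ) (hn : 1 ≤ n) (P : Set (Fin n × Fin n)) (wt : Fin n → ℕ)
    (B : ℕ → ℕ∞)
    (hB : ∀ i : ℕ, B i = sInf {ww : ℕ∞ | ∃ S : Finset (Fin n),
      (∀ j ∈ S, (j : ℕ) < i) ∧
      IsMulticutOn (SimpleGraph.pathGraph n) {j : Fin n | (j : ℕ) < i} P ↑S ∧
      ww = ∑ c ∈ S, (wt c : ℕ∞)}) :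
    ((∃ s t : Fin n, (s, t) ∈ P ∧ (s : ℕ) < 1 ∧ (t : ℕ) < 1) →
      B 1 = (wt ⟨0, hn⟩ : ℕ∞)) ∧
    (∀ i istar : ℕ, 1 < i → i ≤ n → 1 ≤ istar → istar ≤ i →
      (∃ s t : Fin n, (s, t) ∈ P ∧ istar ≤ (s : ℕ) + 1 ∧ (s : ℕ) + 1 ≤ i ∧
        istar ≤ (t : ℕ) + 1 ∧ (t : ℕ) + 1 ≤ i) →
      (∀ l : ℕ, istar < l → l ≤ i →
        ¬ ∃ s t : Fin n, (s, t) ∈ P ∧ l ≤ (s : ℕ) + 1 ∧ (s : ℕ) + 1 ≤ i ∧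
          l ≤ (t : ℕ) + 1 ∧ (t : ℕ) + 1 ≤ i) →
      B i = sInf {ww : ℕ∞ | ∃ j : ℕ, istar ≤ j ∧ j ≤ i ∧
        ∃ h : j - 1 < n, ww = (wt ⟨j - 1, h⟩ : ℕ∞) + B (j - 1)}) := by
  constructor
  · rintro ⟨s, t, hP, hs, ht⟩
    rw [hB 1]
    apply le_antisymm
    · apply sInf_le
      refine ⟨{⟨0, hn⟩}, ?_, ?_, ?_⟩
      · intro j hj
        rw [Finset.mem_singleton] at hj
        simp [hj]
      · rw [pg_multicut_iff]
        intro s' t' _ hs' ht'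
        exact ⟨⟨0, hn⟩, Finset.mem_singleton_self _, by simp; omega⟩
      · simp
    · apply le_sInf
      rintro ww ⟨S, hSlt, hScut, rfl⟩
      rw [pg_multicut_iff] at hScut
      obtain ⟨v, hvS, h1, h2⟩ := hScut s t hP (by omega) (by omega)
      have hv : v = ⟨0, hn⟩ := Fin.ext (by simp; omega)
      subst hv
      exact Finset.single_le_sum (f := fun c => (wt c : ℕ∞)) (fun _ _ => zero_le) hvS
  · intro i istar hi1 hin histar1 histari hex hmax
    rw [hB i]
    apply le_antisymm
    · apply le_sInf
      rintro ww ⟨j, hj1, hj2, hjn, rfl⟩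
      have hj0 : 1 ≤ j := le_trans histar1 hj1
      rw [hB (j - 1)]
      have hne : {ww : ℕ∞ | ∃ S : Finset (Fin n), (∀ v ∈ S, (v : ℕ) < j - 1) ∧
          IsMulticutOn (SimpleGraph.pathGraph n) {v : Fin n | (v : ℕ) < j - 1} P ↑S ∧
          ww = ∑ c ∈ S, (wt c : ℕ∞)}.Nonempty := by
        refine ⟨_, Finset.univ.filter (fun v => (v : ℕ) < j - 1),
          fun v hv => (Finset.mem_filter.mp hv).2, ?_, rfl⟩
        rw [pg_multicut_iff]
        intro s t _ hs ht
        rcases le_total (s : ℕ) (t : ℕ) with h | h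
        · exact ⟨s, Finset.mem_filter.mpr ⟨Finset.mem_univ _, hs⟩, by omega⟩
        · exact ⟨t, Finset.mem_filter.mpr ⟨Finset.mem_univ _, ht⟩, by omega⟩
      obtain ⟨S', hS'lt, hS'cut, hS'w⟩ := csInf_mem hne
      rw [pg_multicut_iff] at hS'cut
      rw [hS'w]
      have hjlt : j - 1 < i := by omega
      have hnotboth : ∀ s t : Fin n, (s, t) ∈ P → (s : ℕ) < i → (t : ℕ) < i →
          ¬ (j ≤ (s : ℕ) ∧ j ≤ (t : ℕ)) := by
        rintro s t hP hs ht ⟨h1, h2⟩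
        rcases eq_or_lt_of_le hj2 with rfl | hji
        · omega
        · exact hmax (j + 1) (by omega) (by omega)
            ⟨s, t, hP, by omega, by omega, by omega, by omega⟩
      refine le_trans (sInf_le ⟨insert ⟨j - 1, hjn⟩ S', ?_, ?_, rfl⟩) ?_
      · intro v hv
        rcases Finset.mem_insert.mp hv with rfl | hv
        · simpa using hjlt
        · have := hS'lt v hv; omega
      · rw [pg_multicut_iff]
        intro s t hP hs ht
        by_cases hcase : (s : ℕ) < j - 1 ∧ (t : ℕ) < j - 1
        · obtain ⟨v, hvS, hb⟩ := hS'cut s t hP hcase.1 hcase.2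
          exact ⟨v, Finset.mem_insert_of_mem hvS, hb⟩
        · have := hnotboth s t hP hs ht
          exact ⟨⟨j - 1, hjn⟩, Finset.mem_insert_self _ _, by simp; omega⟩
      · by_cases hmem : (⟨j - 1, hjn⟩ : Fin n) ∈ S'
        · rw [Finset.insert_eq_self.mpr hmem]
          exact le_add_self
        · rw [Finset.sum_insert hmem]
    · apply le_sInf
      rintro ww ⟨S, hSlt, hScut, rfl⟩
      rw [pg_multicut_iff] at hScut
      obtain ⟨s₀, t₀, hP0, hsa, hsb, hta, htb⟩ := hex
      obtain ⟨v, hvS, hv1, hv2⟩ := hScut s₀ t₀ hP0 (by omega) (by omega)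
      have hmem1 : ((wt v : ℕ∞) + B (v : ℕ)) ∈ {ww : ℕ∞ | ∃ j : ℕ, istar ≤ j ∧ j ≤ i ∧
          ∃ h : j - 1 < n, ww = (wt ⟨j - 1, h⟩ : ℕ∞) + B (j - 1)} := by
        refine ⟨(v : ℕ) + 1, by omega, by omega, ?_, ?_⟩
        · simp
        · simp
      refine le_trans (sInf_le hmem1) ?_
      have hfil : B ((v : ℕ)) ≤ ∑ c ∈ S.filter (fun u : Fin n => (u : ℕ) < (v : ℕ)), (wt c : ℕ∞) := by
        rw [hB ((v : ℕ))]
        apply sInf_le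
        refine ⟨_, fun u hu => (Finset.mem_filter.mp hu).2, ?_, rfl⟩
        rw [pg_multicut_iff]
        intro s t hP hs ht
        obtain ⟨w, hwS, hb1, hb2⟩ := hScut s t hP (by omega) (by omega)
        exact ⟨w, Finset.mem_filter.mpr ⟨hwS, by omega⟩, hb1, hb2⟩
      refine le_trans (add_le_add le_rfl hfil) ?_
      have hvnot : v ∉ S.filter (fun u : Fin n => (u : ℕ) < (v : ℕ)) := by simp
      rw [show (↑(wt v) : ℕ∞) + ∑ c ∈ S.filter (fun u : Fin n => (u : ℕ) < (v : ℕ)),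
            (↑(wt c) : ℕ∞) =
          ∑ c ∈ insert v (S.filter (fun u : Fin n => (u : ℕ) < (v : ℕ))), (↑(wt c) : ℕ∞) from
        (Finset.sum_insert (f := fun c : Fin n => (wt c : ℕ∞)) hvnot).symm]
      apply Finset.sum_le_sum_of_subset
      intro u hu
      rcases Finset.mem_insert.mp hu with rfl | hu
      · exact hvS
      · exact (Finset.mem_filter.mp hu).1
end

section
/- Let T be a subdivided star rooted at its center r (the unique vertex of degree at least 3), with terminal pairs P \subseteq V(T) \times V(T), weights wt : V(T) \to \mathbb{N} with wt(r) > w, and weight budget w. Suppose some terminal pair path of P does not pass through r, and let z be a vertex closest to r such that some terminal pair path of P is contained in P^\dag_{r,z} = P_{r,z} \setminus \{r\}. Define T' = T \setminus T^\dag_z, P' = (P \setminus (V(T^\dag_{r,z}) \times V(T^\dag_{r,z}))) \cup \{(r,z)\} where T^\dag_{r,z} = T_{r,z} \setminus \{r\}, and wt'(v) = wt(v) + m(v) for v \in V(P^\dag_{r,z}) and wt'(v) = wt(v) otherwise, where m(v) is the minimum wt-weight of a P|_{T^\dag_v}-multicut in T^\dag_v. Then T has a P-multicut of wt-weight at most w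 if and only if T' has a P'-multicut of wt'-weight at most w. -/
open SimpleGraph

set_option linter.unusedSectionVars false

namespace TreeAux

variable {V : Type*} [DecidableEq V] {T : SimpleGraph V}

noncomputable def tpath (hT : T.IsTree) (s t : V) : T.Walk s t :=
  (hT.existsUnique_path s t).exists.choose

variable (hT : T.IsTree)

lemma tpath_isPath (s t : V) : (tpath hT s t).IsPath :=
  (hT.existsUnique_path s t).exists.choose_spec

lemma tpath_unique {s t : V} (p : T.Walk s t) (hp : p.IsPath) : p = tpath hT s t :=
  (hT.existsUnique_path s t).unique hp (tpath_isPath hT s t)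

lemma tpath_support_subset {s t : V} (W : T.Walk s t) :
    (tpath hT s t).support ⊆ W.support := by
  rw [← tpath_unique hT W.bypass W.bypass_isPath]
  exact W.support_bypass_subset

lemma onPath_iff {a b v : V} : OnPath T a b v ↔ v ∈ (tpath hT a b).support := by
  constructor
  · intro h; exact h _ (tpath_isPath hT a b)
  · intro h p hp; rwa [tpath_unique hT p hp]

lemma mem_tpath_symm {a b v : V} (h : v ∈ (tpath hT a b).support) :
    v ∈ (tpath hT b a).support := by
  rw [← tpath_unique hT (tpath hT a b).reverse (tpath_isPath hT a b).reverse]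
  simpa using h

lemma tpath_takeUntil {a b v : V} (h : v ∈ (tpath hT a b).support) :
    (tpath hT a b).takeUntil v h = tpath hT a v :=
  tpath_unique hT _ ((tpath_isPath hT a b).takeUntil h)

lemma tpath_dropUntil {a b v : V} (h : v ∈ (tpath hT a b).support) :
    (tpath hT a b).dropUntil v h = tpath hT v b :=
  tpath_unique hT _ ((tpath_isPath hT a b).dropUntil h)

lemma prefix_subset {a b v : V} (h : v ∈ (tpath hT a b).support) :
    (tpath hT a v).support ⊆ (tpath hT a b).support := by
  rw [← tpath_takeUntil hT h]
  exact Walk.support_takeUntil_subset _ h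

lemma suffix_subset {a b v : V} (h : v ∈ (tpath hT a b).support) :
    (tpath hT v b).support ⊆ (tpath hT a b).support := by
  rw [← tpath_dropUntil hT h]
  exact Walk.support_dropUntil_subset _ h

lemma tripod {a b c v : V} (h : v ∈ (tpath hT a b).support) :
    v ∈ (tpath hT a c).support ∨ v ∈ (tpath hT c b).support := by
  have := tpath_support_subset hT ((tpath hT a c).append (tpath hT c b)) h
  rwa [Walk.mem_support_append_iff] at this

lemma tpath_length (a b : V) : (tpath hT a b).length = T.dist a b := by
  refine le_antisymm ?_ (SimpleGraph.dist_le _)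
  obtain ⟨p, hp⟩ := hT.isConnected.exists_walk_length_eq_dist a b
  rw [← tpath_unique hT p.bypass p.bypass_isPath, ← hp]
  exact p.length_bypass_le

lemma dist_add_of_mem {a b v : V} (h : v ∈ (tpath hT a b).support) :
    T.dist a v + T.dist v b = T.dist a b := by
  have hs := Walk.take_spec (tpath hT a b) h
  have := congrArg Walk.length hs
  rw [Walk.length_append, tpath_takeUntil hT h, tpath_dropUntil hT h] at this
  rw [← tpath_length hT, ← tpath_length hT, ← tpath_length hT, this]

lemma dist_le_of_mem {a b v : V} (h : v ∈ (tpath hT a b).support) :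
    T.dist a v ≤ T.dist a b := by
  have := dist_add_of_mem hT h; omega

lemma dist_lt_of_mem {a b v : V} (h : v ∈ (tpath hT a b).support) (hvb : v ≠ b) :
    T.dist a v < T.dist a b := by
  have h1 := dist_add_of_mem hT h
  have h2 : 0 < T.dist v b := hT.isConnected.pos_dist_of_ne hvb
  omega

include hT in
lemma eq_of_mem_tpath_self {a v : V} (h : v ∈ (tpath hT a a).support) : v = a := by
  have hnil : (Walk.nil : T.Walk a a) = tpath hT a a := tpath_unique hT Walk.nil (by simp)
  rw [← hnil] at h
  simpa using h

include hT in
lemma reachable (a b : V) : T.Reachable a b := ⟨tpath hT a b⟩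

lemma start_not_mem_drop {a b v : V} (h : v ∈ (tpath hT a b).support) (hva : v ≠ a) :
    a ∉ (tpath hT v b).support := by
  intro ha
  have hp : ((tpath hT a b).takeUntil v h).append ((tpath hT a b).dropUntil v h) = tpath hT a b :=
    Walk.take_spec _ h
  have hpath := tpath_isPath hT a b
  rw [← hp] at hpath
  have hnodup := hpath.support_nodup
  rw [Walk.support_append] at hnodup
  have hdisj := List.disjoint_of_nodup_append hnodup
  have ha1 : a ∈ ((tpath hT a b).takeUntil v h).support := Walk.start_mem_support _
  have ha2 : a ∈ ((tpath hT a b).dropUntil v h).support.tail := by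
    rw [tpath_dropUntil hT h]
    have : (tpath hT v b).support = v :: (tpath hT v b).support.tail :=
      (Walk.support_eq_cons _)
    rw [this] at ha
    rcases List.mem_cons.mp ha with h' | h'
    · exact absurd h'.symm hva
    · exact h'
  exact hdisj ha1 ha2

lemma separation {r s t v : V} (h1 : v ∈ (tpath hT r s).support)
    (h2 : v ∉ (tpath hT r t).support) : v ∈ (tpath hT s t).support := by
  rcases tripod hT (c := t) h1 with h | h
  · exact absurd h h2
  · exact mem_tpath_symm hT h

lemma order_lemma {a b s t : V} (hs : s ∈ (tpath hT a b).support)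
    (ht : t ∈ (tpath hT a b).support) :
    s ∈ (tpath hT a t).support ∨ t ∈ (tpath hT a s).support := by
  by_cases hst : s = t
  · subst hst; exact Or.inl (Walk.end_mem_support _)
  rcases tripod hT (c := t) hs with h | h
  · exact Or.inl h
  rcases tripod hT (c := s) ht with h' | h'
  · exact Or.inr h'
  -- h : s ∈ tpath t b, h' : t ∈ tpath s b
  exfalso
  have e1 := dist_add_of_mem hT h
  have e2 := dist_add_of_mem hT h'
  have : T.dist s t = 0 := by
    have hc : T.dist t s = T.dist s t := SimpleGraph.dist_comm ..
    omega
  exact hst ((hT.isConnected.dist_eq_zero_iff).mp this)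


lemma adj_mem_or {r u x : V} (h : T.Adj u x) :
    x ∈ (tpath hT r u).support ∨ u ∈ (tpath hT r x).support := by
  by_cases hx : x ∈ (tpath hT r u).support
  · exact Or.inl hx
  · right
    have hp : (Walk.cons h.symm (tpath hT r u).reverse).IsPath := by
      rw [Walk.cons_isPath_iff]
      exact ⟨(tpath_isPath hT r u).reverse, by simpa using hx⟩
    have he := tpath_unique hT (Walk.cons h.symm (tpath hT r u).reverse).reverse hp.reverse
    rw [← he]
    simp

lemma take_drop_eq {a b x u : V} (hx : x ∈ (tpath hT a b).support)
    (h1 : u ∈ (tpath hT a x).support) (h2 : u ∈ (tpath hT x b).support) : u = x := by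
  by_contra hne
  have hp : ((tpath hT a b).takeUntil x hx).append ((tpath hT a b).dropUntil x hx) =
      tpath hT a b := Walk.take_spec _ hx
  have hpath := tpath_isPath hT a b
  rw [← hp] at hpath
  have hnodup := hpath.support_nodup
  rw [Walk.support_append] at hnodup
  have hdisj := List.disjoint_of_nodup_append hnodup
  have ha1 : u ∈ ((tpath hT a b).takeUntil x hx).support := by
    rw [tpath_takeUntil hT hx]; exact h1
  have ha2 : u ∈ ((tpath hT a b).dropUntil x hx).support.tail := by
    rw [tpath_dropUntil hT hx]
    have hcons : (tpath hT x b).support = x :: (tpath hT x b).support.tail :=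
      Walk.support_eq_cons _
    rw [hcons] at h2
    rcases List.mem_cons.mp h2 with h' | h'
    · exact absurd h' hne
    · exact h'
  exact hdisj ha1 ha2

lemma internal_nbrs {a b x : V} (hx : x ∈ (tpath hT a b).support) (hxa : x ≠ a) (hxb : x ≠ b) :
    ∃ y w : V, y ≠ w ∧ T.Adj x y ∧ T.Adj x w ∧
      y ∈ (tpath hT a b).support ∧ w ∈ (tpath hT a b).support := by
  obtain ⟨y, hady, q, hq⟩ := Walk.exists_eq_cons_of_ne hxa (tpath hT a x).reverse
  have hy : y ∈ (tpath hT a x).support := by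
    have : y ∈ (tpath hT a x).reverse.support := by
      rw [hq, Walk.support_cons]; exact List.mem_cons_of_mem _ (Walk.start_mem_support q)
    simpa using this
  have hynx : y ≠ x := by
    have hnp : (tpath hT a x).reverse.IsPath := (tpath_isPath hT a x).reverse
    rw [hq] at hnp
    have := hnp.support_nodup
    rw [Walk.support_cons] at this
    intro h
    exact (List.nodup_cons.mp this).1 (h ▸ Walk.start_mem_support q)
  obtain ⟨w, hadw, q', hq'⟩ := Walk.exists_eq_cons_of_ne hxb (tpath hT x b)
  have hw : w ∈ (tpath hT x b).support := by
    rw [hq', Walk.support_cons]; exact List.mem_cons_of_mem _ (Walk.start_mem_support q')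
  have hwnx : w ≠ x := by
    have hnp := tpath_isPath hT x b
    rw [hq'] at hnp
    have := hnp.support_nodup
    rw [Walk.support_cons] at this
    intro h
    exact (List.nodup_cons.mp this).1 (h ▸ Walk.start_mem_support q')
  refine ⟨y, w, ?_, hady, hadw, prefix_subset hT hx hy, suffix_subset hT hx hw⟩
  intro h
  exact hynx (take_drop_eq hT hx hy (h ▸ hw))

lemma three_le_degree [Fintype V] [DecidableRel T.Adj] {x y w u : V}
    (h1 : T.Adj x y) (h2 : T.Adj x w) (h3 : T.Adj x u)
    (hyw : y ≠ w) (hyu : y ≠ u) (hwu : w ≠ u) : 3 ≤ T.degree x := by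
  have hsub : ({y, w, u} : Finset V) ⊆ T.neighborFinset x := by
    intro c hc
    simp only [Finset.mem_insert, Finset.mem_singleton] at hc
    rcases hc with rfl | rfl | rfl <;> simp [SimpleGraph.mem_neighborFinset, h1, h2, h3]
  calc 3 = ({y, w, u} : Finset V).card := by
        rw [Finset.card_insert_of_notMem (by simp [hyw, hyu]),
          Finset.card_insert_of_notMem (by simp [hwu]), Finset.card_singleton]
    _ ≤ _ := Finset.card_le_card hsub

lemma star_comparable [Fintype V] [DecidableRel T.Adj] {r : V}
    (hruniq : ∀ v : V, 3 ≤ T.degree v → v = r) :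
    ∀ n : ℕ, ∀ u v : V, (tpath hT u v).length ≤ n →
      r ∉ (tpath hT u v).support →
      u ∈ (tpath hT r v).support ∨ v ∈ (tpath hT r u).support := by
  intro n
  induction n with
  | zero =>
    intro u v hl _
    have huv : u = v := Walk.eq_of_length_eq_zero (Nat.le_zero.mp hl)
    subst huv; exact Or.inl (Walk.end_mem_support _)
  | succ n ih =>
    intro u v hl hr
    by_cases huv : u = v
    · subst huv; exact Or.inl (Walk.end_mem_support _)
    obtain ⟨x, hadj, q, hq⟩ := Walk.exists_eq_cons_of_ne huv (tpath hT u v)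
    have hq_path : q.IsPath := by
      have := tpath_isPath hT u v
      rw [hq, Walk.cons_isPath_iff] at this
      exact this.1
    have hq_eq : q = tpath hT x v := tpath_unique hT q hq_path
    have hrq : r ∉ (tpath hT x v).support := fun hc =>
      hr (by rw [hq, Walk.support_cons]; exact List.mem_cons_of_mem _ (hq_eq ▸ hc))
    have hlen : (tpath hT x v).length ≤ n := by
      have h1 : (tpath hT u v).length = q.length + 1 := by rw [hq]; simp
      rw [hq_eq] at h1
      omega
    have hxr : x ≠ r := by
      intro h
      subst h
      exact hr (by rw [hq, Walk.support_cons]; exact List.mem_cons_of_mem _ q.start_mem_support)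
    rcases ih x v hlen hrq with hxv | hvx
    · by_cases hupath : u ∈ (tpath hT r v).support
      · exact Or.inl hupath
      by_cases hxv' : x = v
      · subst hxv'
        rcases adj_mem_or hT (r := r) hadj with h1 | h2
        · exact Or.inr h1
        · exact absurd h2 hupath
      · exfalso
        obtain ⟨y, w, hyw, hady, hadw, hy, hw⟩ := internal_nbrs hT hxv hxr hxv'
        have hdeg := three_le_degree hady hadw hadj.symm hyw
          (fun h => hupath (h ▸ hy)) (fun h => hupath (h ▸ hw))
        exact hxr (hruniq x hdeg)
    · rcases adj_mem_or hT (r := r) hadj with h1 | h2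
      · exact Or.inr (prefix_subset hT h1 hvx)
      · exact order_lemma hT h2 (prefix_subset hT (Walk.end_mem_support _) hvx)

end TreeAux


open TreeAux in
/-- Correctness of the path-cleaning step on a subdivided star (Lemma 4 of the
paper): with `z` closest to the center `r` such that some terminal pair path is
contained in `P^†_{r,z}`, the instance is equivalent to the instance on
`T' = T - T^†_z` with terminal pairs `P' = (P \ (T^†_{r,z} × T^†_{r,z})) ∪ {(r,z)}`
and weights increased, on `P^†_{r,z}`, by the minimum weight of a multicut below. -/
theorem stmt_11 {V : Type*} [Fintype V] [DecidableEq V] (T : SimpleGraph V)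
    [DecidableRel T.Adj] (hT : T.IsTree) (r : V)
    (hr3 : 3 ≤ T.degree r) (hruniq : ∀ v : V, 3 ≤ T.degree v → v = r)
    (P : Set (V × V)) (wt : V → ℕ) (w : ℕ) (hwtr : w < wt r)
    (z : V)
    -- some terminal pair path is contained in `P^†_{r,z}`
    (hz : ∃ s t : V, (s, t) ∈ P ∧ OnPath T r z s ∧ OnPath T r z t ∧ s ≠ r ∧ t ≠ r)
    -- and `z` is closest to `r` with this property
    (hzclosest : ∀ z' : V,
      (∃ s t : V, (s, t) ∈ P ∧ OnPath T r z' s ∧ OnPath T r z' t ∧ s ≠ r ∧ t ≠ r) →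
      T.dist r z ≤ T.dist r z')
    -- `A = V(T') = V(T - T^†_z)`
    (A : Set V) (hA : A = {u : V | ¬ (u ≠ z ∧ InSubtree T r z u)})
    (P' : Set (V × V))
    (hP' : P' = (P \ (TdagSet T r r z ×ˢ TdagSet T r r z)) ∪ {(r, z)})
    -- `m v` : minimum weight of a `P|_{T^†_v}`-multicut in `T^†_v`
    (m : V → ℕ∞)
    (hm : ∀ v : V, m v = sInf {ww : ℕ∞ | ∃ S : Finset V,
      (↑S : Set V) ⊆ {u : V | u ≠ v ∧ InSubtree T r v u} ∧
      IsMulticutOn T {u : V | u ≠ v ∧ InSubtree T r v u} P ↑S ∧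
      ww = ∑ c ∈ S, (wt c : ℕ∞)})
    (wt' : V → ℕ∞)
    (hwt'a : ∀ v : V, OnPath T r z v ∧ v ≠ r → wt' v = (wt v : ℕ∞) + m v)
    (hwt'b : ∀ v : V, ¬ (OnPath T r z v ∧ v ≠ r) → wt' v = (wt v : ℕ∞)) :
    (∃ S : Finset V, IsMulticut T P ↑S ∧ ∑ c ∈ S, wt c ≤ w) ↔
    (∃ S' : Finset V, (↑S' : Set V) ⊆ A ∧ IsMulticutOn T A P' ↑S' ∧
      (∑ c ∈ S', wt' c) ≤ (w : ℕ∞)) := by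
  classical
  have hIn : ∀ v u : V, InSubtree T r v u ↔ v ∈ (tpath hT r u).support :=
    fun v u => onPath_iff hT
  have hOn : ∀ a b v : V, OnPath T a b v ↔ v ∈ (tpath hT a b).support :=
    fun a b v => onPath_iff hT
  obtain ⟨s₀, t₀, hP₀, hs₀, ht₀, hs₀r, ht₀r⟩ := hz
  rw [hOn] at hs₀ ht₀
  have hzr : z ≠ r := by
    intro h; subst h
    exact hs₀r (eq_of_mem_tpath_self hT hs₀)
  have hleg : ∀ s t : V, s ∈ (tpath hT r z).support → t ∈ (tpath hT r z).support →
      s ≠ r → t ≠ r → ∀ c ∈ (tpath hT s t).support,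
      c ∈ (tpath hT r z).support ∧ c ≠ r := by
    intro s t hs ht hsr htr c hc
    rcases order_lemma hT hs ht with h | h
    · refine ⟨prefix_subset hT ht (suffix_subset hT h hc), fun hcr => ?_⟩
      exact start_not_mem_drop hT h hsr (hcr ▸ hc)
    · have hc' := mem_tpath_symm hT hc
      refine ⟨prefix_subset hT hs (suffix_subset hT h hc'), fun hcr => ?_⟩
      exact start_not_mem_drop hT h htr (hcr ▸ hc')
  have hbranch : ∀ v u : V, v ∈ (tpath hT r z).support → v ≠ r →
      v ∈ (tpath hT r u).support → u ∈ TdagSet T r r z := by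
    intro v u hv hvr hvu
    have hur : u ≠ r := by
      intro h; subst h
      exact hvr (eq_of_mem_tpath_self hT hvu)
    refine ⟨hur, (hOn r u r).mpr (Walk.start_mem_support _), Or.inr ?_⟩
    intro p hp
    rw [tpath_unique hT p hp]
    intro hrp
    rcases tripod hT (c := v) hrp with h | h
    · exact start_not_mem_drop hT hvu hvr (mem_tpath_symm hT h)
    · exact start_not_mem_drop hT hv hvr h
  have hAiff : ∀ u : V, u ∈ A ↔ (u = z ∨ z ∉ (tpath hT r u).support) := by
    intro u
    rw [hA]
    constructor
    · intro h
      by_cases hu : u = z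
      · exact Or.inl hu
      · exact Or.inr (fun hc => h ⟨hu, (hIn z u).mpr hc⟩)
    · rintro (rfl | h) hmem
      · exact hmem.1 rfl
      · exact h ((hIn z u).mp hmem.2)
  have hlegA : ∀ u ∈ (tpath hT r z).support, u ∈ A := by
    intro u hu
    rw [hAiff]
    by_cases h : u = z
    · exact Or.inl h
    · right; intro hc
      have h1 := dist_lt_of_mem hT hu h
      have h2 := dist_le_of_mem hT hc
      omega
  have hmle : ∀ (v : V) (S : Finset V),
      (↑S : Set V) ⊆ {u : V | u ≠ v ∧ InSubtree T r v u} →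
      IsMulticutOn T {u : V | u ≠ v ∧ InSubtree T r v u} P ↑S →
      m v ≤ ∑ c ∈ S, (wt c : ℕ∞) := by
    intro v S h1 h2
    rw [hm v]
    exact sInf_le ⟨S, h1, h2, rfl⟩
  have hmatt : ∀ v : V, ∃ S : Finset V,
      (↑S : Set V) ⊆ {u : V | u ≠ v ∧ InSubtree T r v u} ∧
      IsMulticutOn T {u : V | u ≠ v ∧ InSubtree T r v u} P ↑S ∧
      m v = ∑ c ∈ S, (wt c : ℕ∞) := by
    intro v
    rw [hm v]
    have hne : {ww : ℕ∞ | ∃ S : Finset V,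
        (↑S : Set V) ⊆ {u : V | u ≠ v ∧ InSubtree T r v u} ∧
        IsMulticutOn T {u : V | u ≠ v ∧ InSubtree T r v u} P ↑S ∧
        ww = ∑ c ∈ S, (wt c : ℕ∞)}.Nonempty := by
      refine ⟨_, Finset.univ.filter (fun u => u ≠ v ∧ InSubtree T r v u), ?_, ?_, rfl⟩
      · intro c hc
        have := Finset.mem_coe.mp hc
        exact (Finset.mem_filter.mp this).2
      · intro s t hst hs ht p hp hsup
        refine ⟨s, ?_, p.start_mem_support⟩
        simp only [Finset.coe_filter, Finset.mem_univ, true_and, Set.mem_setOf_eq]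
        exact hs
    exact csInf_mem hne
  constructor
  · rintro ⟨S, hScut, hSw⟩
    have hrS : r ∉ S := by
      intro h
      have := Finset.single_le_sum (f := wt) (fun i _ => Nat.zero_le _) h
      omega
    obtain ⟨c₀, hc₀S, hc₀p⟩ := hScut s₀ t₀ hP₀ (tpath hT s₀ t₀) (tpath_isPath hT s₀ t₀)
    have hc₀leg := hleg s₀ t₀ hs₀ ht₀ hs₀r ht₀r c₀ hc₀p
    obtain ⟨v, hvL, hvmin⟩ := Finset.exists_min_image
      (S.filter (fun u => u ∈ (tpath hT r z).support)) (fun u => T.dist r u)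
      ⟨c₀, Finset.mem_filter.mpr ⟨hc₀S, hc₀leg.1⟩⟩
    have hvS : v ∈ S := (Finset.mem_filter.mp hvL).1
    have hvleg : v ∈ (tpath hT r z).support := (Finset.mem_filter.mp hvL).2
    have hvr : v ≠ r := fun h => hrS (h ▸ hvS)
    set Sv := S.filter (fun u => u ≠ v ∧ InSubtree T r v u) with hSv
    set F := S.filter (fun u => ¬ InSubtree T r v u) with hF
    have hSvsub : (↑Sv : Set V) ⊆ {u : V | u ≠ v ∧ InSubtree T r v u} := by
      intro c hc
      exact (Finset.mem_filter.mp (Finset.mem_coe.mp hc)).2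
    have hSvcut : IsMulticutOn T {u : V | u ≠ v ∧ InSubtree T r v u} P ↑Sv := by
      intro s t hst hs ht p hp hsup
      obtain ⟨c, hcS, hcp⟩ := hScut s t hst p hp
      exact ⟨c, Finset.mem_coe.mpr (Finset.mem_filter.mpr ⟨hcS, hsup c hcp⟩), hcp⟩
    have hmv := hmle v Sv hSvsub hSvcut
    have hvF : v ∉ F := by
      simp only [hF, Finset.mem_filter, not_and, not_not]
      intro _
      exact (hIn v v).mpr (Walk.end_mem_support _)
    refine ⟨insert v F, ?_, ?_, ?_⟩
    · -- subset of A
      intro c hc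
      rcases Finset.mem_insert.mp (Finset.mem_coe.mp hc) with rfl | hcF
      · exact hlegA c hvleg
      · rw [hAiff]
        by_contra hcon
        push_neg at hcon
        obtain ⟨hcz, hzc⟩ := hcon
        have : v ∈ (tpath hT r c).support := prefix_subset hT hzc hvleg
        exact (Finset.mem_filter.mp hcF).2 ((hIn v c).mpr this)
    · -- multicut
      intro s t hst hsA htA p hp hsup
      rw [hP'] at hst
      rcases hst with ⟨hstP, hstbr⟩ | hstz
      · obtain ⟨c, hcS, hcp⟩ := hScut s t hstP p hp
        rw [tpath_unique hT p hp] at hcp ⊢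
        by_cases hcT : InSubtree T r v c
        · have hvc : v ∈ (tpath hT r c).support := (hIn v c).mp hcT
          by_cases hcv : c = v
          · exact ⟨v, Finset.mem_coe.mpr (Finset.mem_insert_self v F), hcv ▸ hcp⟩
          · have hone : ¬ InSubtree T r v s ∨ ¬ InSubtree T r v t := by
              by_contra hcon
              push_neg at hcon
              exact hstbr (Set.mk_mem_prod
                (hbranch v s hvleg hvr ((hIn v s).mp hcon.1))
                (hbranch v t hvleg hvr ((hIn v t).mp hcon.2)))
            refine ⟨v, Finset.mem_coe.mpr (Finset.mem_insert_self v F), ?_⟩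
            rcases hone with hns | hnt
            · have hvm : v ∈ (tpath hT c s).support :=
                separation hT hvc (fun hcon => hns ((hIn v s).mpr hcon))
              have := mem_tpath_symm hT hvm
              exact prefix_subset hT hcp this
            · have hvm : v ∈ (tpath hT c t).support :=
                separation hT hvc (fun hcon => hnt ((hIn v t).mpr hcon))
              exact suffix_subset hT hcp hvm
        · exact ⟨c, Finset.mem_coe.mpr (Finset.mem_insert_of_mem
            (Finset.mem_filter.mpr ⟨hcS, hcT⟩)), hcp⟩
      · have hsz : s = r ∧ t = z := by
          simpa [Prod.ext_iff] using hstz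
        obtain ⟨rfl, rfl⟩ := hsz
        exact ⟨v, Finset.mem_coe.mpr (Finset.mem_insert_self v F),
          by rw [tpath_unique hT p hp]; exact hvleg⟩
    · -- weight
      have hFwt : ∀ c ∈ F, wt' c = (wt c : ℕ∞) := by
        intro c hcF
        apply hwt'b
        rintro ⟨hc1, hc2⟩
        rw [hOn] at hc1
        have hcL : c ∈ S.filter (fun u => u ∈ (tpath hT r z).support) :=
          Finset.mem_filter.mpr ⟨(Finset.mem_filter.mp hcF).1, hc1⟩
        have hmin := hvmin c hcL
        have hcT : ¬ InSubtree T r v c := (Finset.mem_filter.mp hcF).2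
        rcases order_lemma hT hvleg hc1 with h | h
        · exact hcT ((hIn v c).mpr h)
        · have hcv : c ≠ v := by
            intro hcon; subst hcon
            exact hcT ((hIn c c).mpr (Walk.end_mem_support _))
          have := dist_lt_of_mem hT h hcv
          omega
      have hvwt : wt' v = (wt v : ℕ∞) + m v := by
        apply hwt'a
        exact ⟨(hOn r z v).mpr hvleg, hvr⟩
      have hdisj : Disjoint Sv F := by
        rw [Finset.disjoint_left]
        intro c hc1 hc2
        exact (Finset.mem_filter.mp hc2).2 (Finset.mem_filter.mp hc1).2.2
      have hvSvF : v ∉ Sv ∪ F := by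
        rw [Finset.mem_union]
        rintro (h | h)
        · exact (Finset.mem_filter.mp h).2.1 rfl
        · exact hvF h
      have hsub : insert v (Sv ∪ F) ⊆ S := by
        intro c hc
        rcases Finset.mem_insert.mp hc with rfl | hc
        · exact hvS
        · rcases Finset.mem_union.mp hc with h | h
          · exact (Finset.mem_filter.mp h).1
          · exact (Finset.mem_filter.mp h).1
      calc ∑ c ∈ insert v F, wt' c = wt' v + ∑ c ∈ F, wt' c := Finset.sum_insert hvF
        _ = ((wt v : ℕ∞) + m v) + ∑ c ∈ F, (wt c : ℕ∞) := by
            rw [hvwt, Finset.sum_congr rfl hFwt]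
        _ ≤ ((wt v : ℕ∞) + ∑ c ∈ Sv, (wt c : ℕ∞)) + ∑ c ∈ F, (wt c : ℕ∞) := by
            gcongr
        _ = ∑ c ∈ insert v (Sv ∪ F), (wt c : ℕ∞) := by
            rw [Finset.sum_insert hvSvF, Finset.sum_union hdisj, add_assoc]
        _ ≤ ∑ c ∈ S, (wt c : ℕ∞) := Finset.sum_le_sum_of_subset hsub
        _ ≤ (w : ℕ∞) := by
            rw [← Nat.cast_sum]
            exact_mod_cast hSw
  · rintro ⟨S', hS'A, hS'cut, hS'w⟩
    have hrS' : r ∉ S' := by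
      intro h
      have h1 : wt' r = (wt r : ℕ∞) := hwt'b r (by simp)
      have h2 := Finset.single_le_sum (f := wt') (fun i _ => zero_le) h
      rw [h1] at h2
      have h3 : (wt r : ℕ∞) ≤ (w : ℕ∞) := le_trans h2 hS'w
      have := Nat.cast_le.mp h3
      omega
    have hrzP' : (r, z) ∈ P' := by
      rw [hP']
      exact Or.inr rfl
    have hrA : r ∈ A := by
      rw [hAiff]
      right
      intro hc
      exact hzr (eq_of_mem_tpath_self hT hc)
    have hzA : z ∈ A := by rw [hAiff]; exact Or.inl rfl
    obtain ⟨v, hvS', hvp⟩ := hS'cut r z hrzP' hrA hzA (tpath hT r z)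
      (tpath_isPath hT r z) hlegA
    have hvS'' : v ∈ S' := Finset.mem_coe.mp hvS'
    have hvr : v ≠ r := fun h => hrS' (h ▸ hvS'')
    obtain ⟨Sv, hSvsub, hSvcut, hSveq⟩ := hmatt v
    have hwtle : ∀ c : V, (wt c : ℕ∞) ≤ wt' c := by
      intro c
      by_cases h : OnPath T r z c ∧ c ≠ r
      · rw [hwt'a c h]; exact le_self_add
      · rw [hwt'b c h]
    refine ⟨S' ∪ Sv, ?_, ?_⟩
    · -- multicut
      intro s t hst p hp
      have hpe : p = tpath hT s t := tpath_unique hT p hp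
      subst hpe
      by_cases hvp' : v ∈ (tpath hT s t).support
      · exact ⟨v, Finset.mem_coe.mpr (Finset.mem_union_left _ hvS''), hvp'⟩
      by_cases hsT : InSubtree T r v s <;> by_cases htT : InSubtree T r v t
      · -- both in T_v
        have hsv : s ≠ v := by
          intro h; subst h
          exact hvp' (Walk.start_mem_support _)
        have htv : t ≠ v := by
          intro h; subst h
          exact hvp' (Walk.end_mem_support _)
        have hsup : ∀ u ∈ (tpath hT s t).support, u ∈ {u : V | u ≠ v ∧ InSubtree T r v u} := by
          intro u hu
          have huv : u ≠ v := fun h => hvp' (h ▸ hu)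
          refine ⟨huv, ?_⟩
          rcases tripod hT (c := u) ((hIn v s).mp hsT) with h | h
          · exact (hIn v u).mpr h
          · exfalso
            exact hvp' (prefix_subset hT hu (mem_tpath_symm hT h))
        obtain ⟨c, hcSv, hcp⟩ := hSvcut s t hst ⟨hsv, hsT⟩ ⟨htv, htT⟩
          (tpath hT s t) (tpath_isPath hT s t) hsup
        exact ⟨c, Finset.mem_coe.mpr (Finset.mem_union_right _ (Finset.mem_coe.mp hcSv)), hcp⟩
      · exact absurd (separation hT ((hIn v s).mp hsT)
          (fun h => htT ((hIn v t).mpr h))) hvp'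
      · exfalso
        have := separation hT ((hIn v t).mp htT) (fun h => hsT ((hIn v s).mpr h))
        exact hvp' (mem_tpath_symm hT this)
      · -- both outside T_v
        by_cases hbr : (s, t) ∈ (TdagSet T r r z) ×ˢ (TdagSet T r r z)
        · exfalso
          obtain ⟨hsbr, htbr⟩ := hbr
          have hsnz : r ∉ (tpath hT s z).support := by
            rcases hsbr.2.2 with h | h
            · exfalso
              apply hsT
              have := (hIn z s).mp h
              exact (hIn v s).mpr (prefix_subset hT this hvp)
            · intro hc
              exact h (tpath hT s z) (tpath_isPath hT s z) hc
          have htnz : r ∉ (tpath hT t z).support := by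
            rcases htbr.2.2 with h | h
            · exfalso
              apply htT
              have := (hIn z t).mp h
              exact (hIn v t).mpr (prefix_subset hT this hvp)
            · intro hc
              exact h (tpath hT t z) (tpath_isPath hT t z) hc
          have hrvz : r ∉ (tpath hT v z).support := start_not_mem_drop hT hvp hvr
          have hsnv : r ∉ (tpath hT s v).support := by
            intro hc
            rcases tripod hT (c := z) hc with h | h
            · exact hsnz h
            · exact hrvz (mem_tpath_symm hT h)
          have htnv : r ∉ (tpath hT t v).support := by
            intro hc
            rcases tripod hT (c := z) hc with h | h
            · exact htnz h
            · exact hrvz (mem_tpath_symm hT h)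
          have hs2 : s ∈ (tpath hT r v).support := by
            rcases star_comparable hT hruniq (tpath hT s v).length s v le_rfl hsnv with h | h
            · exact h
            · exact absurd ((hIn v s).mpr h) hsT
          have ht2 : t ∈ (tpath hT r v).support := by
            rcases star_comparable hT hruniq (tpath hT t v).length t v le_rfl htnv with h | h
            · exact h
            · exact absurd ((hIn v t).mpr h) htT
          have hsnv' : s ≠ v := by
            intro h; subst h
            exact hsT ((hIn s s).mpr (Walk.end_mem_support _))
          have htnv' : t ≠ v := by
            intro h; subst h
            exact htT ((hIn t t).mpr (Walk.end_mem_support _))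
          have hvz : T.dist r v ≤ T.dist r z := dist_le_of_mem hT hvp
          rcases order_lemma hT hs2 ht2 with h | h
          · have hd : T.dist r t < T.dist r v := dist_lt_of_mem hT ht2 htnv'
            have := hzclosest t ⟨s, t, hst, (hOn r t s).mpr h,
              (hOn r t t).mpr (Walk.end_mem_support _), hsbr.1, htbr.1⟩
            omega
          · have hd : T.dist r s < T.dist r v := dist_lt_of_mem hT hs2 hsnv'
            have := hzclosest s ⟨s, t, hst, (hOn r s s).mpr (Walk.end_mem_support _),
              (hOn r s t).mpr h, hsbr.1, htbr.1⟩
            omega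
        · -- (s,t) survives into P'
          have hstP' : (s, t) ∈ P' := by
            rw [hP']
            exact Or.inl ⟨hst, hbr⟩
          have hall : ∀ u ∈ (tpath hT s t).support, u ∈ A := by
            intro u hu
            by_contra huA
            rw [hAiff] at huA
            push_neg at huA
            obtain ⟨huz, hzu⟩ := huA
            have hvu : v ∈ (tpath hT r u).support := prefix_subset hT hzu hvp
            have huv : u ≠ v := by
              intro h; subst h
              exact hvp' hu
            have hvm : v ∈ (tpath hT u t).support :=
              separation hT hvu (fun h => htT ((hIn v t).mpr h))
            exact hvp' (suffix_subset hT hu hvm)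
          obtain ⟨c, hcS', hcp⟩ := hS'cut s t hstP'
            (hall s (Walk.start_mem_support _)) (hall t (Walk.end_mem_support _))
            (tpath hT s t) (tpath_isPath hT s t) hall
          exact ⟨c, Finset.mem_coe.mpr (Finset.mem_union_left _ (Finset.mem_coe.mp hcS')), hcp⟩
    · -- weight
      have key : (↑(∑ c ∈ S' ∪ Sv, wt c) : ℕ∞) ≤ (w : ℕ∞) := by
        rw [Nat.cast_sum]
        have h1 : ∑ c ∈ S' ∪ Sv, (wt c : ℕ∞) ≤
            ∑ c ∈ S', (wt c : ℕ∞) + ∑ c ∈ Sv, (wt c : ℕ∞) := by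
          have := Finset.sum_union_inter (s₁ := S') (s₂ := Sv) (f := fun c => (wt c : ℕ∞))
          calc ∑ c ∈ S' ∪ Sv, (wt c : ℕ∞)
              ≤ ∑ c ∈ S' ∪ Sv, (wt c : ℕ∞) + ∑ c ∈ S' ∩ Sv, (wt c : ℕ∞) := le_self_add
            _ = _ := this
        have h2 : ∑ c ∈ S', (wt c : ℕ∞) + ∑ c ∈ Sv, (wt c : ℕ∞) ≤ ∑ c ∈ S', wt' c := by
          rw [← hSveq]
          have e1 := Finset.sum_erase_add S' (fun c => (wt c : ℕ∞)) hvS''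
          have e2 := Finset.sum_erase_add S' (fun c => wt' c) hvS''
          have hvwt : wt' v = (wt v : ℕ∞) + m v :=
            hwt'a v ⟨(hOn r z v).mpr hvp, hvr⟩
          calc ∑ c ∈ S', (wt c : ℕ∞) + m v
              = (∑ c ∈ S'.erase v, (wt c : ℕ∞) + (wt v : ℕ∞)) + m v := by rw [e1]
            _ = ∑ c ∈ S'.erase v, (wt c : ℕ∞) + wt' v := by rw [hvwt, add_assoc]
            _ ≤ ∑ c ∈ S'.erase v, wt' c + wt' v := by
                gcongr <;> exact hwtle _
            _ = ∑ c ∈ S', wt' c := e2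
        exact le_trans h1 (le_trans h2 hS'w)
      exact_mod_cast key
end

section
/- Let G be a finite simple graph with vertices v_1, \dots, v_n. Let G' be the caterpillar tree on vertices x_1, \dots, x_n, y_1, \dots, y_n where x_i is adjacent to x_{i+1} for all i \in [n-1] and y_i is adjacent to x_i for all i \in [n], and let P = \{(y_i, y_j) : v_i v_j \in E(G)\}. Then for every index set I \subseteq [n], the set \{v_i : i \in I\} is a vertex cover of G if and only if \{y_i : i \in I\} is a P-multicut in G'. -/
open SimpleGraph

section Aux

variable (n : ℕ)

/-- The caterpillar graph. -/
abbrev Cat : SimpleGraph (Fin n ⊕ Fin n) :=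
  SimpleGraph.fromRel (fun a b : Fin n ⊕ Fin n =>
    (∃ i j : Fin n, a = Sum.inl i ∧ b = Sum.inl j ∧ (i : ℕ) + 1 = (j : ℕ)) ∨
    (∃ i : Fin n, a = Sum.inl i ∧ b = Sum.inr i))

lemma cat_adj_xx {i j : Fin n} (h : (i : ℕ) + 1 = (j : ℕ)) :
    (Cat n).Adj (Sum.inl i) (Sum.inl j) := by
  refine ⟨by simp; exact fun e => by omega, Or.inl (Or.inl ⟨i, j, rfl, rfl, h⟩)⟩

lemma cat_adj_xy (i : Fin n) : (Cat n).Adj (Sum.inl i) (Sum.inr i) := by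
  exact ⟨by simp, Or.inl (Or.inr ⟨i, rfl, rfl⟩)⟩

lemma cat_spine : ∀ (k : ℕ) (i j : Fin n), (i : ℕ) + k = (j : ℕ) →
    ∃ p : (Cat n).Walk (Sum.inl i) (Sum.inl j), p.IsPath ∧
      ∀ u ∈ p.support, ∃ m : Fin n, u = Sum.inl m ∧ i ≤ m ∧ m ≤ j := by
  intro k
  induction k with
  | zero =>
    intro i j h
    have : i = j := Fin.ext (by omega)
    subst this
    refine ⟨SimpleGraph.Walk.nil, SimpleGraph.Walk.IsPath.nil, ?_⟩
    intro u hu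
    simp only [SimpleGraph.Walk.support_nil, List.mem_singleton] at hu
    exact ⟨i, hu, le_refl _, le_refl _⟩
  | succ k ih =>
    intro i j h
    have hi1 : (i : ℕ) + 1 < n := by have := j.isLt; omega
    set i' : Fin n := ⟨(i : ℕ) + 1, hi1⟩ with hi'
    obtain ⟨p, hp, hsup⟩ := ih i' j (by simp [hi']; omega)
    refine ⟨SimpleGraph.Walk.cons (cat_adj_xx n (i := i) (j := i') rfl) p, ?_, ?_⟩
    · rw [SimpleGraph.Walk.cons_isPath_iff]
      refine ⟨hp, fun hmem => ?_⟩
      obtain ⟨m, hm, him, _⟩ := hsup _ hmem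
      have he : i = m := Sum.inl.inj hm
      subst he
      have := Fin.le_def.mp him
      simp only [hi'] at this
      omega
    · intro u hu
      rw [SimpleGraph.Walk.support_cons, List.mem_cons] at hu
      rcases hu with hu | hu
      · refine ⟨i, hu, le_refl _, ?_⟩
        rw [Fin.le_def]; omega
      · obtain ⟨m, hm, him, hmj⟩ := hsup u hu
        refine ⟨m, hm, ?_, hmj⟩
        have := Fin.le_def.mp him
        simp only [hi'] at this
        rw [Fin.le_def]; omega

lemma cat_path (i j : Fin n) (h : i < j) :
    ∃ p : (Cat n).Walk (Sum.inr i) (Sum.inr j), p.IsPath ∧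
      ∀ u ∈ p.support, ∀ m : Fin n, u = Sum.inr m → m = i ∨ m = j := by
  obtain ⟨p0, hp0, hsup0⟩ := cat_spine n ((j : ℕ) - (i : ℕ)) i j (by
    have := Fin.lt_def.mp h; omega)
  set p1 := p0.concat (cat_adj_xy n j) with hp1def
  have hsup1 : p1.support = p0.support ++ [Sum.inr j] := by
    rw [hp1def, SimpleGraph.Walk.support_concat]
  have hp1 : p1.IsPath := by
    rw [SimpleGraph.Walk.isPath_def, hsup1]
    rw [List.nodup_append]
    refine ⟨hp0.support_nodup, List.nodup_singleton _, ?_⟩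
    intro u hu b hb hub
    obtain ⟨m, hm, _, _⟩ := hsup0 u hu
    simp only [List.mem_singleton] at hb
    subst hb; subst hub
    exact absurd hm (by simp)
  refine ⟨SimpleGraph.Walk.cons (cat_adj_xy n i).symm p1, ?_, ?_⟩
  · rw [SimpleGraph.Walk.cons_isPath_iff]
    refine ⟨hp1, fun hmem => ?_⟩
    rw [hsup1, List.mem_append] at hmem
    rcases hmem with hmem | hmem
    · obtain ⟨m, hm, _, _⟩ := hsup0 _ hmem
      exact absurd hm (by simp)
    · simp only [List.mem_singleton, Sum.inr.injEq] at hmem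
      exact absurd hmem h.ne
  · intro u hu m hm
    rw [SimpleGraph.Walk.support_cons, List.mem_cons, hsup1, List.mem_append] at hu
    rcases hu with hu | hu | hu
    · subst hm; exact Or.inl (Sum.inr.inj hu)
    · obtain ⟨m', hm', _, _⟩ := hsup0 u hu
      subst hm; exact absurd hm' (by simp)
    · simp only [List.mem_singleton] at hu
      subst hm; exact Or.inr (Sum.inr.inj hu)

end Aux

/-- The reduction from Vertex Cover to Unconstrained Weighted Multicut on the
caterpillar tree: `{v_i : i ∈ I}` is a vertex cover of `G` iff `{y_i : i ∈ I}`
is a `P`-multicut in the caterpillar `G'`, where `x_i = Sum.inl i`,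
`y_i = Sum.inr i`, and `P = {(y_i, y_j) : v_i v_j ∈ E(G)}`. -/
theorem stmt_13 (n : ℕ) (G : SimpleGraph (Fin n)) (I : Set (Fin n)) :
    (∀ i j : Fin n, G.Adj i j → i ∈ I ∨ j ∈ I) ↔
      IsMulticut
        (SimpleGraph.fromRel (fun a b : Fin n ⊕ Fin n =>
          (∃ i j : Fin n, a = Sum.inl i ∧ b = Sum.inl j ∧ (i : ℕ) + 1 = (j : ℕ)) ∨
          (∃ i : Fin n, a = Sum.inl i ∧ b = Sum.inr i)))
        {q : (Fin n ⊕ Fin n) × (Fin n ⊕ Fin n) |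
          ∃ i j : Fin n, G.Adj i j ∧ q = (Sum.inr i, Sum.inr j)}
        (Sum.inr '' I) := by
  constructor
  · intro hvc s t hP p hp
    obtain ⟨i, j, hadj, heq⟩ := hP
    obtain ⟨hs, ht⟩ := Prod.mk.injEq .. ▸ heq
    subst hs; subst ht
    rcases hvc i j hadj with hi | hj
    · exact ⟨Sum.inr i, ⟨i, hi, rfl⟩, p.start_mem_support⟩
    · exact ⟨Sum.inr j, ⟨j, hj, rfl⟩, p.end_mem_support⟩
  · intro hmc
    have key : ∀ i j : Fin n, i < j → G.Adj i j → i ∈ I ∨ j ∈ I := by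
      intro i j hij hadj
      obtain ⟨p, hp, hsup⟩ := cat_path n i j hij
      obtain ⟨v, ⟨m, hmI, hv⟩, hvs⟩ :=
        hmc (Sum.inr i) (Sum.inr j) ⟨i, j, hadj, rfl⟩ p hp
      rcases hsup v hvs m hv.symm with h | h
      · exact Or.inl (h ▸ hmI)
      · exact Or.inr (h ▸ hmI)
    intro i j hadj
    rcases lt_trichotomy i j with h | h | h
    · exact key i j h hadj
    · exact absurd (h ▸ hadj) (G.loopless.irrefl j)
    · exact (key j i h hadj.symm).symm
end

section
/- Let T be a finite tree rooted at r, let y be a strict ancestor of x in T, and let P \subseteq V(T) \times V(T) be terminal pairs such that (y,x) \in P and no terminal pair path of P is contained in T^\dag_{y,x} = T_{y,x} \setminus \{y\}. Then every inclusion-minimal P-multicut in T contains exactly one vertex of the (y,x)-path P_{y,x}. -/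
open SimpleGraph

section Aux

open SimpleGraph.Walk

variable {V : Type*} [DecidableEq V] {T : SimpleGraph V}

omit [DecidableEq V] in
/-- In a tree, any two paths with the same endpoints coincide. -/
lemma tree_path_unique (hT : T.IsTree) {a b : V} {p q : T.Walk a b}
    (hp : p.IsPath) (hq : q.IsPath) : p = q :=
  (hT.existsUnique_path a b).unique hp hq

/-- A vertex lying both in the take-part and the drop-part of a path must be the
split vertex. -/
lemma mem_take_drop {s t a u : V} {p : T.Walk s t} (hp : p.IsPath) (ha : a ∈ p.support)
    (h1 : u ∈ (p.takeUntil a ha).support) (h2 : u ∈ (p.dropUntil a ha).support) : u = a := by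
  by_contra hne
  have hnd : ((p.takeUntil a ha).support ++ (p.dropUntil a ha).support.tail).Nodup := by
    rw [← Walk.support_append, Walk.take_spec]
    exact hp.support_nodup
  have h2' : u ∈ (p.dropUntil a ha).support.tail := by
    rw [Walk.support_eq_cons (p.dropUntil a ha), List.mem_cons] at h2
    rcases h2 with h2 | h2
    · exact absurd h2 hne
    · exact h2
  exact (List.disjoint_of_nodup_append hnd) h1 h2'

/-- Order on a path: of two vertices on a path, one occurs in the initial segment
up to the other. -/
lemma mem_takeUntil_or (hT : T.IsTree) {s t a b : V} {p : T.Walk s t} (hp : p.IsPath)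
    (ha : a ∈ p.support) (hb : b ∈ p.support) :
    a ∈ (p.takeUntil b hb).support ∨ b ∈ (p.takeUntil a ha).support := by
  by_cases h1 : a ∈ (p.takeUntil b hb).support
  · exact Or.inl h1
  right
  have h2 : a ∈ (p.dropUntil b hb).support := by
    have ha' := ha
    rw [← Walk.take_spec p hb, Walk.mem_support_append_iff] at ha'
    exact ha'.resolve_left h1
  have hWp : ((p.takeUntil b hb).append ((p.dropUntil b hb).takeUntil a h2)).append
      ((p.dropUntil b hb).dropUntil a h2) = p := by
    rw [← Walk.append_assoc, Walk.take_spec, Walk.take_spec]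
  have hWpath : ((p.takeUntil b hb).append ((p.dropUntil b hb).takeUntil a h2)).IsPath :=
    Walk.IsPath.of_append_left (by rw [hWp]; exact hp)
  have hbW : b ∈ ((p.takeUntil b hb).append ((p.dropUntil b hb).takeUntil a h2)).support := by
    rw [Walk.mem_support_append_iff]
    exact Or.inl (Walk.end_mem_support _)
  rwa [tree_path_unique hT (hp.takeUntil ha) hWpath]

/-- In a tree, the unique path between two vertices of a path stays inside that path. -/
lemma seg_subset (hT : T.IsTree) {s t a b : V} {p : T.Walk s t} (hp : p.IsPath)
    (ha : a ∈ p.support) (hb : b ∈ p.support)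
    {W : T.Walk a b} (hW : W.IsPath) : ∀ v ∈ W.support, v ∈ p.support := by
  rcases mem_takeUntil_or hT hp ha hb with h | h
  · have hEq : W = (p.takeUntil b hb).dropUntil a h :=
      tree_path_unique hT hW ((hp.takeUntil hb).dropUntil h)
    intro v hv
    rw [hEq] at hv
    exact Walk.support_takeUntil_subset p hb (Walk.support_dropUntil_subset _ h hv)
  · have hEq : W.reverse = (p.takeUntil a ha).dropUntil b h :=
      tree_path_unique hT hW.reverse ((hp.takeUntil ha).dropUntil h)
    intro v hv
    have hv' : v ∈ W.reverse.support := by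
      rw [Walk.support_reverse]; exact List.mem_reverse.mpr hv
    rw [hEq] at hv'
    exact Walk.support_takeUntil_subset p ha (Walk.support_dropUntil_subset _ h hv')

/-- If every `(a,x)`-path avoids `y`, `b ≠ y` and `b` is adjacent to `a`, then every
`(b,x)`-path avoids `y`. -/
lemma avoid_step (hT : T.IsTree) {y x a b : V} (hb : b ≠ y) (hab : T.Adj a b)
    (hx : ∀ p : T.Walk a x, p.IsPath → y ∉ p.support) :
    ∀ p : T.Walk b x, p.IsPath → y ∉ p.support := by
  obtain ⟨qa, hqa, -⟩ := hT.existsUnique_path a x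
  have hyqa := hx qa hqa
  by_cases hbq : b ∈ qa.support
  · intro p hp
    rw [tree_path_unique hT hp (hqa.dropUntil hbq)]
    exact fun hy => hyqa (Walk.support_dropUntil_subset _ hbq hy)
  · intro p hp
    rw [tree_path_unique hT hp (hqa.cons hbq (h := hab.symm))]
    rw [Walk.support_cons]
    intro hy
    rw [List.mem_cons] at hy
    rcases hy with hy | hy
    · exact hb hy.symm
    · exact hyqa hy

/-- The Tdag set is closed under moving along an edge, as long as one does not step
onto `y`. -/
lemma tdag_adj (hT : T.IsTree) {r y x a b : V} (ha : a ∈ TdagSet T r y x) (hab : T.Adj a b)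
    (hb : b ≠ y) : b ∈ TdagSet T r y x := by
  obtain ⟨hay, haIn, hax⟩ := ha
  obtain ⟨pa, hpa, -⟩ := hT.existsUnique_path r a
  have hya : y ∈ pa.support := haIn pa hpa
  by_cases hbpa : b ∈ pa.support
  · -- `b` is on the `(r,a)`-path; the `(r,b)`-path is `pa.takeUntil b`.
    have hpb : (pa.takeUntil b hbpa).IsPath := hpa.takeUntil hbpa
    have hedge : (Walk.cons hab.symm Walk.nil : T.Walk b a).IsPath :=
      Walk.IsPath.nil.cons (by simp [hab.ne'])
    have hdrop : pa.dropUntil b hbpa = Walk.cons hab.symm Walk.nil :=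
      tree_path_unique hT (hpa.dropUntil hbpa) hedge
    have hypb : y ∈ (pa.takeUntil b hbpa).support := by
      have hya' := hya
      rw [← Walk.take_spec pa hbpa, Walk.mem_support_append_iff] at hya'
      rcases hya' with h | h
      · exact h
      · exfalso
        rw [hdrop, Walk.support_cons, Walk.support_nil, List.mem_cons, List.mem_cons] at h
        rcases h with h | h
        · exact hb h.symm
        · rcases h with h | h
          · exact hay h.symm
          · exact absurd h List.not_mem_nil
    refine ⟨hb, fun q hq => by rw [tree_path_unique hT hq hpb]; exact hypb, ?_⟩
    rcases hax with hx | hx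
    · have hxpa : x ∈ pa.support := hx pa hpa
      rw [← Walk.take_spec pa hbpa, Walk.mem_support_append_iff] at hxpa
      rcases hxpa with h | h
      · exact Or.inl fun q hq => by rw [tree_path_unique hT hq hpb]; exact h
      · rw [hdrop, Walk.support_cons, Walk.support_nil, List.mem_cons, List.mem_cons] at h
        rcases h with h | h
        · subst h
          exact Or.inl fun q _ => Walk.end_mem_support q
        · rcases h with h | h
          · subst h
            refine Or.inr fun q hq hyq => ?_
            rw [tree_path_unique hT hq hedge, Walk.support_cons, Walk.support_nil,
              List.mem_cons, List.mem_cons] at hyq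
            rcases hyq with h | h
            · exact hb h.symm
            · rcases h with h | h
              · exact hay h.symm
              · exact absurd h List.not_mem_nil
          · exact absurd h List.not_mem_nil
    · exact Or.inr (avoid_step hT hb hab hx)
  · -- `b` hangs off `a`: the `(r,b)`-path is `pa` extended by the edge `ab`.
    have hpb : (pa.concat hab).IsPath := by
      rw [Walk.isPath_def, Walk.support_concat, List.nodup_append]
      refine ⟨hpa.support_nodup, List.nodup_singleton b, ?_⟩
      intro v hv w hv' hvw
      rw [List.mem_singleton] at hv'
      subst hv' hvw
      exact hbpa hv
    have hysup : y ∈ (pa.concat hab).support := by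
      rw [Walk.support_concat, List.mem_append]
      exact Or.inl hya
    refine ⟨hb, fun q hq => by rw [tree_path_unique hT hq hpb]; exact hysup, ?_⟩
    rcases hax with hx | hx
    · refine Or.inl fun q hq => ?_
      rw [tree_path_unique hT hq hpb, Walk.support_concat,
        List.mem_append]
      exact Or.inl (hx pa hpa)
    · exact Or.inr (avoid_step hT hb hab hx)

/-- Walking from a Tdag vertex while avoiding `y` stays in the Tdag set. -/
lemma tdag_walk (hT : T.IsTree) {r y x : V} :
    ∀ {a b : V} (q : T.Walk a b), a ∈ TdagSet T r y x → y ∉ q.support →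
      b ∈ TdagSet T r y x := by
  intro a b q
  induction q with
  | nil => exact fun h _ => h
  | @cons u v w huv q ih =>
    intro ha hy
    rw [Walk.support_cons, List.mem_cons] at hy
    push_neg at hy
    have hvy : v ≠ y := fun h => hy.2 (h ▸ Walk.start_mem_support q)
    exact ih (tdag_adj hT ha huv hvy) hy.2

/-- If a path contains a Tdag vertex and a non-Tdag vertex, it contains `y`. -/
lemma y_mem_of (hT : T.IsTree) {r y x s t z u : V} {p : T.Walk s t} (_hp : p.IsPath)
    (hz : z ∈ p.support) (hzT : z ∈ TdagSet T r y x)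
    (hu : u ∈ p.support) (huT : u ∉ TdagSet T r y x) : y ∈ p.support := by
  by_contra hy
  have hyq : y ∉ ((p.takeUntil z hz).reverse.append (p.takeUntil u hu)).support := by
    intro h
    rw [Walk.mem_support_append_iff] at h
    rcases h with h | h
    · rw [Walk.support_reverse, List.mem_reverse] at h
      exact hy (Walk.support_takeUntil_subset p hz h)
    · exact hy (Walk.support_takeUntil_subset p hu h)
  exact huT (tdag_walk hT _ hzT hyq)

/-- Every vertex `≠ y` of the `(y,x)`-path lies in the Tdag set. -/
lemma mem_tdag_of_Q (hT : T.IsTree) {r y x : V} (hIn : InSubtree T r y x)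
    {Q : T.Walk y x} (hQ : Q.IsPath) {z : V} (hz : z ∈ Q.support) (hzy : z ≠ y) :
    z ∈ TdagSet T r y x := by
  obtain ⟨p0, hp0, -⟩ := hT.existsUnique_path r x
  have hy0 : y ∈ p0.support := hIn p0 hp0
  have hQeq : Q = p0.dropUntil y hy0 := tree_path_unique hT hQ (hp0.dropUntil hy0)
  have hzdrop : z ∈ (p0.dropUntil y hy0).support := hQeq ▸ hz
  have hz0 : z ∈ p0.support := Walk.support_dropUntil_subset p0 hy0 hzdrop
  refine ⟨hzy, ?_, Or.inr ?_⟩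
  · rcases mem_takeUntil_or hT hp0 hy0 hz0 with h | h
    · intro q hq
      rw [tree_path_unique hT hq (hp0.takeUntil hz0)]
      exact h
    · exact absurd (mem_take_drop hp0 hy0 h hzdrop) hzy
  · intro q hq hyq
    rw [tree_path_unique hT hq (hQ.dropUntil hz)] at hyq
    have hyt : y ∈ (Q.takeUntil z hz).support := Walk.start_mem_support _
    exact hzy (mem_take_drop hQ hz hyt hyq).symm

end Aux

/-- If `(y,x) ∈ P` for a strict ancestor `y` of `x` and no terminal pair path
of `P` is contained in `T^†_{y,x}`, then every inclusion-minimal `P`-multicut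
contains exactly one vertex of the `(y,x)`-path. -/
theorem stmt_18 {V : Type*} [Fintype V] (T : SimpleGraph V) (hT : T.IsTree) (r : V)
    (y x : V) (hanc : y ≠ x ∧ InSubtree T r y x)
    (P : Set (V × V)) (hyx : (y, x) ∈ P)
    (hnc : ∀ s t : V, (s, t) ∈ P → ∀ p : T.Walk s t, p.IsPath →
      ¬ ∀ u ∈ p.support, u ∈ TdagSet T r y x)
    (Q : T.Walk y x) (hQ : Q.IsPath)
    (S : Set V) (hmc : IsMulticut T P S)
    (hmin : ∀ S' : Set V, S' ⊂ S → ¬ IsMulticut T P S') :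
    ∃! z : V, z ∈ S ∧ z ∈ Q.support := by
  classical
  obtain ⟨z₀, hz₀S, hz₀Q⟩ := hmc y x hyx Q hQ
  -- Auxiliary: two distinct cut vertices on `Q`, with `z1` in the initial segment up to
  -- `z2`, yield a contradiction.
  have aux : ∀ z1 z2 : V, z1 ∈ S → z2 ∈ S → z1 ≠ z2 → (hz2Q : z2 ∈ Q.support) →
      z1 ∈ (Q.takeUntil z2 hz2Q).support → False := by
    intro z1 z2 hz1S hz2S hz12 hz2Q hz1
    -- `z2 ≠ y` (otherwise the initial segment is trivial and `z1 = z2`).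
    have hz2y : z2 ≠ y := by
      rintro rfl
      have hnil : Q.takeUntil z2 hz2Q = Walk.nil :=
        Walk.isPath_iff_eq_nil.mp (hQ.takeUntil hz2Q)
      rw [hnil, Walk.support_nil, List.mem_singleton] at hz1
      exact hz12 hz1
    -- Minimality: removing `z2` breaks the multicut; get a witness pair and path.
    have hnotmc := hmin (S \ {z2}) (Set.sdiff_singleton_ssubset.mpr hz2S)
    rw [IsMulticut] at hnotmc
    push_neg at hnotmc
    obtain ⟨s, t, hst, p, hp, hno⟩ := hnotmc
    -- `z2` is on `p` (it is the only cut vertex there).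
    obtain ⟨v, hvS, hvp⟩ := hmc s t hst p hp
    have hvz2 : v = z2 := by
      by_contra h
      exact hno v ⟨hvS, h⟩ hvp
    subst hvz2
    -- `p` is not contained in the Tdag set.
    have hnc' := hnc s t hst p hp
    push_neg at hnc'
    obtain ⟨u, hup, huT⟩ := hnc'
    -- Hence `p` passes through `y`.
    have hvT : v ∈ TdagSet T r y x := mem_tdag_of_Q hT hanc.2 hQ hz2Q hz2y
    have hyp : y ∈ p.support := y_mem_of hT hp hvp hvT hup huT
    -- The unique `(y,v)`-path (the initial segment of `Q`) lies inside `p`,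
    -- hence `z1 ∈ p.support`, contradicting the choice of `p`.
    have hz1p : z1 ∈ p.support :=
      seg_subset hT hp hyp hvp (hQ.takeUntil hz2Q) z1 hz1
    exact hno z1 ⟨hz1S, hz12⟩ hz1p
  refine ⟨z₀, ⟨hz₀S, hz₀Q⟩, ?_⟩
  rintro z₁ ⟨hz₁S, hz₁Q⟩
  by_contra hne
  rcases mem_takeUntil_or hT hQ hz₁Q hz₀Q with h | h
  · exact aux z₁ z₀ hz₁S hz₀S hne hz₀Q h
  · exact aux z₀ z₁ hz₀S hz₁S (fun h' => hne h'.symm) hz₁Q h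
end
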